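/- arXiv:0801.0731 — 5 statements merged into one kernel-verified Lean document; each statement's English description precedes it below -/
import Mathlib

section
/- Let A be a Banach algebra, let π : A ⊗̂ A → A denote the bounded multiplication map, and let π* : A* → (A ⊗̂ A)* be its adjoint. Then the following are equivalent: (i) A is biflat; (ii) there is a net θ_δ : (A ⊗̂ A)* → A* of bounded A-bimodule morphisms which is uniformly bounded in operator norm and satisfies θ_δ ∘ π* → id_{A*} in the weak* operator topology; (iii) there is a uniformly bounded w*-approximate A-bimodule morphism θ_δ : (A ⊗̂ A)* → A* such that θ_δ ∘ π* → id_{A*} in the weak* operator topology. -/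
noncomputable section

open Filter Topology ComplexConjugate

universe u

/-- A realization of the (Banach-space) projective tensor product `E ⊗̂ F` of two complex
Banach spaces: a Banach space `X` with a contractive bilinear map `tmul` whose range spans a
dense subspace and which enjoys the universal property of the projective tensor product. -/
structure ProjTensor (E : Type u) (F : Type u) [NormedAddCommGroup E] [NormedSpace ℂ E]
    [NormedAddCommGroup F] [NormedSpace ℂ F] : Type (u + 1) where
  X : Type u
  [instNormed : NormedAddCommGroup X]
  [instSpace : NormedSpace ℂ X]
  [instComplete : CompleteSpace X]
  tmul : E →L[ℂ] F →L[ℂ] X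
  norm_tmul_le : ∀ (e : E) (f : F), ‖tmul e f‖ ≤ ‖e‖ * ‖f‖
  dense_span : Dense (↑(Submodule.span ℂ (Set.range fun p : E × F => tmul p.1 p.2)) : Set X)
  lift : ∀ (W : Type u) [NormedAddCommGroup W] [NormedSpace ℂ W] [CompleteSpace W]
      (b : E →L[ℂ] F →L[ℂ] W),
      ∃ L : X →L[ℂ] W, ‖L‖ ≤ ‖b‖ ∧ ∀ (e : E) (f : F), L (tmul e f) = b e f

attribute [instance] ProjTensor.instNormed ProjTensor.instSpace ProjTensor.instComplete

section BanachAlgebra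

variable (A : Type u) [NonUnitalNormedRing A] [NormedSpace ℂ A]
  [IsScalarTower ℂ A A] [SMulCommClass ℂ A A] [CompleteSpace A]

/-- Left multiplication `b ↦ a * b` as a continuous linear map. -/
def lmulOp (a : A) : A →L[ℂ] A := ContinuousLinearMap.mul ℂ A a

/-- Right multiplication `b ↦ b * a` as a continuous linear map. -/
def rmulOp (a : A) : A →L[ℂ] A := (ContinuousLinearMap.mul ℂ A).flip a

/-- A realization of the projective tensor square `A ⊗̂ A` of a Banach algebra `A`, together
with its canonical `A`-bimodule actions `a · (b ⊗ c) = (a*b) ⊗ c`, `(b ⊗ c) · a = b ⊗ (c*a)`,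
and the multiplication map `π : A ⊗̂ A → A`, `π (b ⊗ c) = b * c`. -/
structure TensorSquare extends ProjTensor A A where
  lsmul : A → (X →L[ℂ] X)
  rsmul : A → (X →L[ℂ] X)
  lsmul_tmul : ∀ a b c : A, lsmul a (tmul b c) = tmul (a * b) c
  rsmul_tmul : ∀ a b c : A, rsmul a (tmul b c) = tmul b (c * a)
  lsmul_norm_le : ∀ (a : A) (m : X), ‖lsmul a m‖ ≤ ‖a‖ * ‖m‖
  rsmul_norm_le : ∀ (a : A) (m : X), ‖rsmul a m‖ ≤ ‖a‖ * ‖m‖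
  mulMap : X →L[ℂ] A
  mulMap_tmul : ∀ a b : A, mulMap (tmul a b) = a * b

variable {A}

namespace TensorSquare

variable (ts : TensorSquare A)

/-- The adjoint `π* : A* → (A ⊗̂ A)*` of the multiplication map. -/
def piStar (φ : A →L[ℂ] ℂ) : ts.X →L[ℂ] ℂ := φ.comp ts.mulMap

/-- A bounded linear map `θ : (A ⊗̂ A)* → A*` is an `A`-bimodule morphism (for the canonical
dual bimodule actions `⟨a·ψ, m⟩ = ⟨ψ, m·a⟩`, `⟨ψ·a, m⟩ = ⟨ψ, a·m⟩` on `(A ⊗̂ A)*` and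
`⟨a·φ, b⟩ = ⟨φ, b*a⟩`, `⟨φ·a, b⟩ = ⟨φ, a*b⟩` on `A*`). -/
def IsBimoduleMorphism (θ : (ts.X →L[ℂ] ℂ) →L[ℂ] (A →L[ℂ] ℂ)) : Prop :=
  ∀ (a : A) (ψ : ts.X →L[ℂ] ℂ),
    θ (ψ.comp (ts.rsmul a)) = (θ ψ).comp (rmulOp A a) ∧
    θ (ψ.comp (ts.lsmul a)) = (θ ψ).comp (lmulOp A a)

/-- `A` is biflat: there is a bounded `A`-bimodule morphism `θ : (A ⊗̂ A)* → A*` with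
`θ ∘ π* = id`. -/
def Biflat : Prop :=
  ∃ θ : (ts.X →L[ℂ] ℂ) →L[ℂ] (A →L[ℂ] ℂ),
    ts.IsBimoduleMorphism θ ∧ ∀ φ : A →L[ℂ] ℂ, θ (ts.piStar φ) = φ

/-- `A` is approximately biflat: there is a net `θ_δ : (A ⊗̂ A)* → A*` of bounded
`A`-bimodule morphisms with `θ_δ ∘ π* → id_{A*}` in the weak* operator topology. -/
def ApproximatelyBiflat : Prop :=
  ∃ (ι : Type u) (ne : Nonempty ι) (sl : SemilatticeSup ι)
    (θ : ι → ((ts.X →L[ℂ] ℂ) →L[ℂ] (A →L[ℂ] ℂ))),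
    letI := ne
    letI := sl
    (∀ i, ts.IsBimoduleMorphism (θ i)) ∧
      ∀ (a : A) (φ : A →L[ℂ] ℂ),
        Tendsto (fun i => θ i (ts.piStar φ) a) atTop (𝓝 (φ a))

/-- `A` is pseudo-amenable: there is a net `(m_α)` in `A ⊗̂ A` with
`a · m_α - m_α · a → 0` and `π(m_α) a → a` in norm for every `a ∈ A`. -/
def PseudoAmenable : Prop :=
  ∃ (ι : Type u) (ne : Nonempty ι) (sl : SemilatticeSup ι) (m : ι → ts.X),
    letI := ne
    letI := sl
    (∀ a : A, Tendsto (fun i => ts.lsmul a (m i) - ts.rsmul a (m i)) atTop (𝓝 0)) ∧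
      ∀ a : A, Tendsto (fun i => ts.mulMap (m i) * a) atTop (𝓝 a)

/-- `A` is pseudo-contractible: there is a net `(m_α)` in `A ⊗̂ A` with
`a · m_α = m_α · a` for all `a, α`, and `π(m_α) a → a` in norm for every `a ∈ A`. -/
def PseudoContractible : Prop :=
  ∃ (ι : Type u) (ne : Nonempty ι) (sl : SemilatticeSup ι) (m : ι → ts.X),
    letI := ne
    letI := sl
    (∀ (i : ι) (a : A), ts.lsmul a (m i) = ts.rsmul a (m i)) ∧
      ∀ a : A, Tendsto (fun i => ts.mulMap (m i) * a) atTop (𝓝 a)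

end TensorSquare

end BanachAlgebra

/-- A Banach algebra has a (two-sided, not necessarily bounded) approximate identity. -/
def HasApproximateIdentity (B : Type u) [NonUnitalNormedRing B] : Prop :=
  ∃ (ι : Type u) (ne : Nonempty ι) (sl : SemilatticeSup ι) (e : ι → B),
    letI := ne
    letI := sl
    ∀ b : B, Tendsto (fun i => e i * b) atTop (𝓝 b) ∧ Tendsto (fun i => b * e i) atTop (𝓝 b)

/-- A Banach algebra has a central approximate identity. -/
def HasCentralApproximateIdentity (B : Type u) [NonUnitalNormedRing B] : Prop :=
  ∃ (ι : Type u) (ne : Nonempty ι) (sl : SemilatticeSup ι) (e : ι → B),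
    letI := ne
    letI := sl
    (∀ (i : ι) (b : B), e i * b = b * e i) ∧
      ∀ b : B, Tendsto (fun i => e i * b) atTop (𝓝 b) ∧ Tendsto (fun i => b * e i) atTop (𝓝 b)

/-! The nontrivial implication is (iii) ⇒ (i). A uniformly bounded net of operators
`(A ⊗̂ A)* → A*` has, along any ultrafilter refining the net's filter, a weak* operator limit
`Θ`: this is Banach–Alaoglu, which for the weak* operator topology reduces to the compactness
of closed balls in `ℂ`. Pointwise limits preserve the bimodule identities that hold
approximately and the identity `θ_δ ∘ π* → id`, so `Θ` witnesses biflatness. -/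

section WeakStarOperatorLimit

variable {𝕜 E F ι : Type*} [NontriviallyNormedField 𝕜] [ProperSpace 𝕜]
  [NormedAddCommGroup E] [NormedSpace 𝕜 E] [NormedAddCommGroup F] [NormedSpace 𝕜 F]

theorem Ultrafilter.exists_tendsto_of_norm_le (u : Ultrafilter ι) {f : ι → 𝕜} {R : ℝ}
    (hf : ∀ i, ‖f i‖ ≤ R) : ∃ z, Tendsto f u (𝓝 z) := by
  have hmap : (u.map f : Filter 𝕜) ≤ 𝓟 (Metric.closedBall 0 R) := by
    rw [Ultrafilter.coe_map, le_principal_iff, Filter.mem_map]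
    exact Eventually.of_forall fun i => mem_closedBall_zero_iff.mpr (hf i)
  obtain ⟨z, -, hz⟩ := (isCompact_closedBall (0 : 𝕜) R).ultrafilter_le_nhds _ hmap
  exact ⟨z, hz⟩

theorem ContinuousLinearMap.exists_tendsto_apply_apply_of_norm_le (u : Ultrafilter ι)
    (T : ι → E →L[𝕜] F →L[𝕜] 𝕜) {C : ℝ} (hT : ∀ i, ‖T i‖ ≤ C) :
    ∃ Θ : E →L[𝕜] F →L[𝕜] 𝕜, ∀ x y, Tendsto (fun i => T i x y) u (𝓝 (Θ x y)) := by
  have hbound : ∀ i x y, ‖T i x y‖ ≤ C * ‖x‖ * ‖y‖ := fun i x y =>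
    ((T i).le_opNorm₂ x y).trans (by gcongr; exact hT i)
  choose L hL using fun x y => u.exists_tendsto_of_norm_le (hbound · x y)
  have lim_eq : ∀ {x y z}, Tendsto (fun i => T i x y) u (𝓝 z) → L x y = z :=
    tendsto_nhds_unique (hL _ _)
  let B : E →ₗ[𝕜] F →ₗ[𝕜] 𝕜 := LinearMap.mk₂ 𝕜 L
    (fun x x' y => lim_eq (by simpa using (hL x y).add (hL x' y)))
    (fun c x y => lim_eq (by simpa using (hL x y).const_smul c))
    (fun x y y' => lim_eq (by simpa using (hL x y).add (hL x y')))
    (fun c x y => lim_eq (by simpa using (hL x y).const_smul c))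
  exact ⟨B.mkContinuous₂ C fun x y =>
    le_of_tendsto (hL x y).norm (Eventually.of_forall (hbound · x y)), hL⟩

end WeakStarOperatorLimit

namespace TensorSquare

variable {A : Type u} [NonUnitalNormedRing A] [NormedSpace ℂ A]
  [IsScalarTower ℂ A A] [SMulCommClass ℂ A A] (ts : TensorSquare A)

theorem isBimoduleMorphism_of_tendsto {ι : Type*} {l : Filter ι} [l.NeBot]
    {θ : ι → (ts.X →L[ℂ] ℂ) →L[ℂ] (A →L[ℂ] ℂ)} {Θ : (ts.X →L[ℂ] ℂ) →L[ℂ] (A →L[ℂ] ℂ)}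
    (hlim : ∀ ψ b, Tendsto (fun i => θ i ψ b) l (𝓝 (Θ ψ b)))
    (happrox : ∀ (a : A) (ψ : ts.X →L[ℂ] ℂ) (b : A),
      Tendsto (fun i => θ i (ψ.comp (ts.rsmul a)) b - (θ i ψ).comp (rmulOp A a) b) l (𝓝 0) ∧
      Tendsto (fun i => θ i (ψ.comp (ts.lsmul a)) b - (θ i ψ).comp (lmulOp A a) b) l (𝓝 0)) :
    ts.IsBimoduleMorphism Θ := fun a ψ =>
  ⟨ContinuousLinearMap.ext fun b => tendsto_nhds_unique (hlim _ b)
      (by simpa using (happrox a ψ b).1.add (hlim ψ (rmulOp A a b))),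
    ContinuousLinearMap.ext fun b => tendsto_nhds_unique (hlim _ b)
      (by simpa using (happrox a ψ b).2.add (hlim ψ (lmulOp A a b)))⟩

theorem biflat_of_tendsto_of_norm_le {ι : Type*} {l : Filter ι} [l.NeBot] {C : ℝ}
    {θ : ι → (ts.X →L[ℂ] ℂ) →L[ℂ] (A →L[ℂ] ℂ)} (hC : ∀ i, ‖θ i‖ ≤ C)
    (happrox : ∀ (a : A) (ψ : ts.X →L[ℂ] ℂ) (b : A),
      Tendsto (fun i => θ i (ψ.comp (ts.rsmul a)) b - (θ i ψ).comp (rmulOp A a) b) l (𝓝 0) ∧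
      Tendsto (fun i => θ i (ψ.comp (ts.lsmul a)) b - (θ i ψ).comp (lmulOp A a) b) l (𝓝 0))
    (hid : ∀ (a : A) (φ : A →L[ℂ] ℂ), Tendsto (fun i => θ i (ts.piStar φ) a) l (𝓝 (φ a))) :
    ts.Biflat := by
  obtain ⟨Θ, hΘ⟩ :=
    ContinuousLinearMap.exists_tendsto_apply_apply_of_norm_le (Ultrafilter.of l) θ hC
  have hu : (Ultrafilter.of l : Filter ι) ≤ l := Ultrafilter.of_le l
  refine ⟨Θ, ts.isBimoduleMorphism_of_tendsto hΘ fun a ψ b =>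
      ⟨(happrox a ψ b).1.mono_left hu, (happrox a ψ b).2.mono_left hu⟩, fun φ => ?_⟩
  exact ContinuousLinearMap.ext fun a => tendsto_nhds_unique (hΘ _ a) ((hid a φ).mono_left hu)

end TensorSquare

theorem biflat_tfae_general (A : Type u) [NonUnitalNormedRing A] [NormedSpace ℂ A]
    [IsScalarTower ℂ A A] [SMulCommClass ℂ A A]
    (ts : TensorSquare A) :
    List.TFAE
      [ts.Biflat,
        ∃ (ι : Type u) (ne : Nonempty ι) (sl : SemilatticeSup ι) (C : ℝ)
          (θ : ι → ((ts.X →L[ℂ] ℂ) →L[ℂ] (A →L[ℂ] ℂ))),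
          letI := ne
          letI := sl
          (∀ i, ‖θ i‖ ≤ C) ∧ (∀ i, ts.IsBimoduleMorphism (θ i)) ∧
            ∀ (a : A) (φ : A →L[ℂ] ℂ),
              Tendsto (fun i => θ i (ts.piStar φ) a) atTop (𝓝 (φ a)),
        ∃ (ι : Type u) (ne : Nonempty ι) (sl : SemilatticeSup ι) (C : ℝ)
          (θ : ι → ((ts.X →L[ℂ] ℂ) →L[ℂ] (A →L[ℂ] ℂ))),
          letI := ne
          letI := sl
          (∀ i, ‖θ i‖ ≤ C) ∧
            (∀ (a : A) (ψ : ts.X →L[ℂ] ℂ) (b : A),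
              Tendsto (fun i => θ i (ψ.comp (ts.rsmul a)) b - (θ i ψ).comp (rmulOp A a) b)
                atTop (𝓝 0) ∧
              Tendsto (fun i => θ i (ψ.comp (ts.lsmul a)) b - (θ i ψ).comp (lmulOp A a) b)
                atTop (𝓝 0)) ∧
            ∀ (a : A) (φ : A →L[ℂ] ℂ),
              Tendsto (fun i => θ i (ts.piStar φ) a) atTop (𝓝 (φ a))] := by
  tfae_have 1 → 2 := by
    rintro ⟨θ, hθ, hid⟩
    exact ⟨PUnit, inferInstance, inferInstance, ‖θ‖, fun _ => θ, fun _ => le_rfl,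
      fun _ => hθ, fun a φ => by simp [hid]⟩
  tfae_have 2 → 3 := by
    rintro ⟨ι, ne, sl, C, θ, hC, hθ, hid⟩
    exact ⟨ι, ne, sl, C, θ, hC, fun a ψ b => by simp [(hθ _ a ψ).1, (hθ _ a ψ).2], hid⟩
  tfae_have 3 → 1 := by
    rintro ⟨ι, ne, sl, C, θ, hC, happrox, hid⟩
    exact ts.biflat_of_tendsto_of_norm_le hC happrox hid
  tfae_finish

/-- Proposition 2.1: for a Banach algebra `A` (with a realization `ts` of its
projective tensor square `A ⊗̂ A`), the following are equivalent: (i) `A` is biflat;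
(ii) there is a uniformly bounded net of bounded `A`-bimodule morphisms
`θ_δ : (A ⊗̂ A)* → A*` with `θ_δ ∘ π* → id_{A*}` in the weak* operator topology;
(iii) there is a uniformly bounded w*-approximate `A`-bimodule morphism
`θ_δ : (A ⊗̂ A)* → A*` with `θ_δ ∘ π* → id_{A*}` in the weak* operator topology. -/
theorem biflat_tfae (A : Type u) [NonUnitalNormedRing A] [NormedSpace ℂ A]
    [IsScalarTower ℂ A A] [SMulCommClass ℂ A A] [CompleteSpace A]
    (ts : TensorSquare A) :
    List.TFAE
      [ts.Biflat,
        ∃ (ι : Type u) (ne : Nonempty ι) (sl : SemilatticeSup ι) (C : ℝ)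
          (θ : ι → ((ts.X →L[ℂ] ℂ) →L[ℂ] (A →L[ℂ] ℂ))),
          letI := ne
          letI := sl
          (∀ i, ‖θ i‖ ≤ C) ∧ (∀ i, ts.IsBimoduleMorphism (θ i)) ∧
            ∀ (a : A) (φ : A →L[ℂ] ℂ),
              Tendsto (fun i => θ i (ts.piStar φ) a) atTop (𝓝 (φ a)),
        ∃ (ι : Type u) (ne : Nonempty ι) (sl : SemilatticeSup ι) (C : ℝ)
          (θ : ι → ((ts.X →L[ℂ] ℂ) →L[ℂ] (A →L[ℂ] ℂ))),
          letI := ne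
          letI := sl
          (∀ i, ‖θ i‖ ≤ C) ∧
            (∀ (a : A) (ψ : ts.X →L[ℂ] ℂ) (b : A),
              Tendsto (fun i => θ i (ψ.comp (ts.rsmul a)) b - (θ i ψ).comp (rmulOp A a) b)
                atTop (𝓝 0) ∧
              Tendsto (fun i => θ i (ψ.comp (ts.lsmul a)) b - (θ i ψ).comp (lmulOp A a) b)
                atTop (𝓝 0)) ∧
            ∀ (a : A) (φ : A →L[ℂ] ℂ),
              Tendsto (fun i => θ i (ts.piStar φ) a) atTop (𝓝 (φ a))] :=
  biflat_tfae_general A ts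
end
end

section
/- Let A be a Banach algebra. Consider: (i) A is pseudo-amenable; (ii) there is an approximate A-bimodule morphism (β_δ) from A into A ⊗̂ A such that ‖π(β_δ(a)) − a‖ → 0 for every a ∈ A; (iii) there is a w*-approximate A-bimodule morphism θ_δ : (A ⊗̂ A)* → A* such that θ_δ ∘ π* → id_{A*} in the weak* operator topology. Then (i) implies (ii), (ii) implies (iii), and if A has a central approximate identity, then (iii) implies (i). -/
/-!
(i) ⇒ (ii) takes `β_α(a) = m_α · a`, and (ii) ⇒ (iii) takes the adjoints `θ_δ = β_δ*`.

(iii) ⇒ (i): for a finite `F ⊆ A` the defects `(a · m - m · a, π(m) a - a)_{a ∈ F}`,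
`m ∈ A ⊗̂ A`, form a convex set, so by Hahn–Banach it suffices that `0` is in the closure of
its image under every functional `Λ = Σ_a (ψ_a ⊕ φ_a)`. That image is `χ(A ⊗̂ A) - t` with
`χ = Σ_a (ψ_a(a · -) - ψ_a(- · a) + φ_a(π(-) a))` and `t = Σ_a φ_a(a)`. Each `θ_δ(χ)(e_λ)` is
itself a value of `χ`, and for a central approximate identity `(e_λ)` the approximate morphism
property gives `θ_δ(χ)(e_λ) → Σ_a φ_a(e_λ a)` as `δ` grows, which tends to `t` as `λ` grows.
-/

noncomputable section

open Filter Topology ComplexConjugate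

universe u

theorem Convex.zero_mem_closure_of_forall_zero_mem_closure_image {𝕜 E : Type*} [RCLike 𝕜]
    [NormedAddCommGroup E] [NormedSpace 𝕜 E] [NormedSpace ℝ E] [IsScalarTower ℝ 𝕜 E]
    {s : Set E} (hs : Convex ℝ s) (h : ∀ Λ : E →L[𝕜] 𝕜, (0 : 𝕜) ∈ closure (Λ '' s)) :
    0 ∈ closure s := by
  by_contra h0
  obtain ⟨Λ, u, hΛu, hu⟩ :=
    RCLike.geometric_hahn_banach_closed_point (𝕜 := 𝕜) hs.closure isClosed_closure h0
  rw [map_zero, map_zero] at hu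
  obtain ⟨_, ⟨y, hys, rfl⟩, hy⟩ := Metric.mem_closure_iff.1 (h Λ) (-u) (by linarith)
  rw [dist_zero_left] at hy
  have hre := neg_le_of_abs_le (RCLike.abs_re_le_norm (Λ y))
  linarith [hΛu y (subset_closure hys)]

theorem ContinuousLinearMap.exists_apply_eq_bidual_apply {𝕜 E : Type*} [NontriviallyNormedField 𝕜]
    [NormedAddCommGroup E] [NormedSpace 𝕜 E] (χ : E →L[𝕜] 𝕜) (T : (E →L[𝕜] 𝕜) →ₗ[𝕜] 𝕜) :
    ∃ x, χ x = T χ := by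
  by_cases hχ : χ = 0
  · exact ⟨0, by simp [hχ]⟩
  · exact LinearMap.surjective (f := (χ : E →ₗ[𝕜] 𝕜)) (by exact_mod_cast hχ) (T χ)

theorem exists_tendsto_zero_of_forall_finset {α : Type u} {M E : Type*} [SeminormedAddCommGroup E]
    (f : α → M → E) (h : ∀ (F : Finset α) (ε : ℝ), 0 < ε → ∃ m, ∀ a ∈ F, ‖f a m‖ < ε) :
    ∃ m : Finset α × ℕ → M, ∀ a, Tendsto (fun i => f a (m i)) atTop (𝓝 0) := by
  choose m hm using fun i : Finset α × ℕ => h i.1 (1 / ((i.2 : ℝ) + 1)) Nat.one_div_pos_of_nat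
  refine ⟨m, fun a => squeeze_zero_norm' (a := fun i => 1 / ((i.2 : ℝ) + 1)) ?_ ?_⟩
  · filter_upwards [eventually_ge_atTop ({a}, 0)] with i hi
    exact (hm i a (Finset.singleton_subset_iff.1 hi.1)).le
  · rw [← prod_atTop_atTop_eq]
    exact tendsto_one_div_add_atTop_nhds_zero_nat.comp tendsto_snd

namespace TensorSquare

variable {A : Type*} [NonUnitalNormedRing A] [NormedSpace ℂ A] (ts : TensorSquare A)

theorem ext_tmul {W : Type*} [NormedAddCommGroup W] [NormedSpace ℂ W] {f g : ts.X →L[ℂ] W}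
    (h : ∀ b c : A, f (ts.tmul b c) = g (ts.tmul b c)) : f = g := by
  have hspan := LinearMap.eqOn_span' (f := (f : ts.X →ₗ[ℂ] W)) (g := g)
    (s := Set.range fun p : A × A => ts.tmul p.1 p.2) (by rintro _ ⟨p, rfl⟩; exact h p.1 p.2)
  exact ContinuousLinearMap.ext
    (congrFun (Continuous.ext_on ts.dense_span f.continuous g.continuous hspan))

theorem rsmul_mul (a b : A) (m : ts.X) : ts.rsmul (a * b) m = ts.rsmul b (ts.rsmul a m) :=
  DFunLike.congr_fun (ts.ext_tmul (f := ts.rsmul (a * b)) (g := (ts.rsmul b).comp (ts.rsmul a))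
    fun _ _ => by simp [rsmul_tmul, mul_assoc]) m

theorem lsmul_rsmul (a b : A) (m : ts.X) : ts.lsmul a (ts.rsmul b m) = ts.rsmul b (ts.lsmul a m) :=
  DFunLike.congr_fun (ts.ext_tmul (f := (ts.lsmul a).comp (ts.rsmul b))
    (g := (ts.rsmul b).comp (ts.lsmul a)) fun _ _ => by simp [rsmul_tmul, lsmul_tmul]) m

theorem rsmul_add (a b : A) (m : ts.X) : ts.rsmul (a + b) m = ts.rsmul a m + ts.rsmul b m :=
  DFunLike.congr_fun (ts.ext_tmul (f := ts.rsmul (a + b)) (g := ts.rsmul a + ts.rsmul b)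
    fun _ _ => by simp [rsmul_tmul, mul_add]) m

def diagonalDefect (a : A) (m : ts.X) : ts.X × A :=
  (ts.lsmul a m - ts.rsmul a m, ts.mulMap m * a - a)

theorem convex_range_diagonalDefect [IsScalarTower ℂ A A] {κ : Type*} (a : κ → A) :
    Convex ℝ (Set.range fun m k => ts.diagonalDefect (a k) m) := by
  rintro _ ⟨m, rfl⟩ _ ⟨m', rfl⟩ p q - - hpq
  refine ⟨p • m + q • m', funext fun k => Prod.ext ?_ ?_⟩
  · simp only [diagonalDefect, map_add, ContinuousLinearMap.map_smul_of_tower, Pi.add_apply,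
      Pi.smul_apply, Prod.fst_add, Prod.smul_fst]
    module
  · simp only [diagonalDefect, map_add, ContinuousLinearMap.map_smul_of_tower, Pi.add_apply,
      Pi.smul_apply, Prod.snd_add, Prod.smul_snd, add_mul, smul_mul_assoc]
    linear_combination (norm := module) hpq • a k

section SMulCommClass

variable [SMulCommClass ℂ A A]

theorem mulMap_rsmul [IsScalarTower ℂ A A] (a : A) (m : ts.X) :
    ts.mulMap (ts.rsmul a m) = ts.mulMap m * a :=
  DFunLike.congr_fun (ts.ext_tmul (f := ts.mulMap.comp (ts.rsmul a))
    (g := rmulOp A a ∘L ts.mulMap)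
    fun _ _ => by simp [rsmul_tmul, mulMap_tmul, rmulOp, mul_assoc]) m

theorem rsmul_smul (s : ℂ) (a : A) (m : ts.X) : ts.rsmul (s • a) m = s • ts.rsmul a m :=
  DFunLike.congr_fun (ts.ext_tmul (f := ts.rsmul (s • a)) (g := s • ts.rsmul a)
    fun _ _ => by simp [rsmul_tmul, mul_smul_comm]) m

def rsmulCLM (m : ts.X) : A →L[ℂ] ts.X :=
  LinearMap.mkContinuous
    { toFun a := ts.rsmul a m
      map_add' a b := ts.rsmul_add a b m
      map_smul' s a := ts.rsmul_smul s a m }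
    ‖m‖ fun a => (ts.rsmul_norm_le a m).trans_eq (mul_comm _ _)

@[simp] theorem rsmulCLM_apply (m : ts.X) (a : A) : ts.rsmulCLM m a = ts.rsmul a m := rfl

end SMulCommClass

end TensorSquare

section Statement1

variable (A : Type u) [NonUnitalNormedRing A] [NormedSpace ℂ A]
  [IsScalarTower ℂ A A] [SMulCommClass ℂ A A] [CompleteSpace A]

/-- Condition (ii) of Theorem 2.4: there is an approximate `A`-bimodule morphism
`(β_δ)` from `A` into `A ⊗̂ A` with `‖π (β_δ a) - a‖ → 0` for every `a ∈ A`. -/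
def ApproxBimoduleMorphismIntoTensor (ts : TensorSquare A) : Prop :=
  ∃ (ι : Type u) (ne : Nonempty ι) (sl : SemilatticeSup ι) (β : ι → (A →L[ℂ] ts.X)),
    letI := ne
    letI := sl
    (∀ a x : A,
      Tendsto (fun i => β i (a * x) - ts.lsmul a (β i x)) atTop (𝓝 0) ∧
      Tendsto (fun i => β i (x * a) - ts.rsmul a (β i x)) atTop (𝓝 0)) ∧
    ∀ a : A, Tendsto (fun i => ts.mulMap (β i a)) atTop (𝓝 a)

/-- Condition (iii) of Theorem 2.4: a w*-approximate `A`-bimodule morphism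
`θ_δ : (A ⊗̂ A)* → A*` with `θ_δ ∘ π* → id_{A*}` in the weak* operator topology. -/
def WstarApproxBimoduleMorphism (ts : TensorSquare A) : Prop :=
  ∃ (ι : Type u) (ne : Nonempty ι) (sl : SemilatticeSup ι)
    (θ : ι → ((ts.X →L[ℂ] ℂ) →L[ℂ] (A →L[ℂ] ℂ))),
    letI := ne
    letI := sl
    (∀ (a : A) (ψ : ts.X →L[ℂ] ℂ) (b : A),
      Tendsto (fun i => θ i (ψ.comp (ts.rsmul a)) b - (θ i ψ).comp (rmulOp A a) b)
        atTop (𝓝 0) ∧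
      Tendsto (fun i => θ i (ψ.comp (ts.lsmul a)) b - (θ i ψ).comp (lmulOp A a) b)
        atTop (𝓝 0)) ∧
    ∀ (a : A) (φ : A →L[ℂ] ℂ),
      Tendsto (fun i => θ i (ts.piStar φ) a) atTop (𝓝 (φ a))

end Statement1

section Implications

variable {A : Type u} [NonUnitalNormedRing A] [NormedSpace ℂ A]
  [IsScalarTower ℂ A A] [SMulCommClass ℂ A A] {ts : TensorSquare A}

theorem TensorSquare.PseudoAmenable.approxBimoduleMorphismIntoTensor (h : ts.PseudoAmenable) :
    ApproxBimoduleMorphismIntoTensor A ts := by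
  obtain ⟨ι, _, _, m, hcomm, hmul⟩ := h
  refine ⟨ι, inferInstance, inferInstance, fun i => ts.rsmulCLM (m i),
    fun a x => ⟨?_, ?_⟩, fun a => ?_⟩
  · have key : ∀ i, ts.rsmulCLM (m i) (a * x) - ts.lsmul a (ts.rsmulCLM (m i) x) =
        -ts.rsmul x (ts.lsmul a (m i) - ts.rsmul a (m i)) := fun i => by
      simp only [TensorSquare.rsmulCLM_apply, ts.rsmul_mul, ts.lsmul_rsmul, map_sub, neg_sub]
    simpa only [key, map_zero, neg_zero, Function.comp_def] using
      (((ts.rsmul x).continuous.tendsto 0).comp (hcomm a)).neg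
  · simpa only [TensorSquare.rsmulCLM_apply, ts.rsmul_mul, sub_self] using tendsto_const_nhds
  · simpa only [TensorSquare.rsmulCLM_apply, ts.mulMap_rsmul] using hmul a

theorem ApproxBimoduleMorphismIntoTensor.wstarApproxBimoduleMorphism
    (h : ApproxBimoduleMorphismIntoTensor A ts) : WstarApproxBimoduleMorphism A ts := by
  obtain ⟨ι, _, _, β, hβ, hπ⟩ := h
  have hψ : ∀ (ψ : ts.X →L[ℂ] ℂ) {f : ι → ts.X}, Tendsto f atTop (𝓝 0) →
      Tendsto (fun i => -ψ (f i)) atTop (𝓝 0) := fun ψ f hf => by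
    simpa using ((ψ.continuous.tendsto 0).comp hf).neg
  refine ⟨ι, inferInstance, inferInstance, fun i => ContinuousLinearMap.precomp ℂ (β i),
    fun a ψ b => ⟨?_, ?_⟩, fun a φ => ?_⟩
  · simpa [rmulOp] using hψ ψ (hβ a b).2
  · simpa [lmulOp] using hψ ψ (hβ a b).1
  · simpa [TensorSquare.piStar, Function.comp_def] using (φ.continuous.tendsto a).comp (hπ a)

theorem tendsto_wstarApproxMorphism_apply_of_commute {ι : Type*} [SemilatticeSup ι]
    {θ : ι → (ts.X →L[ℂ] ℂ) →L[ℂ] (A →L[ℂ] ℂ)}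
    (hθ : ∀ (a : A) (ψ : ts.X →L[ℂ] ℂ) (b : A),
      Tendsto (fun i => θ i (ψ.comp (ts.rsmul a)) b - (θ i ψ).comp (rmulOp A a) b)
        atTop (𝓝 0) ∧
      Tendsto (fun i => θ i (ψ.comp (ts.lsmul a)) b - (θ i ψ).comp (lmulOp A a) b)
        atTop (𝓝 0))
    (hπ : ∀ (a : A) (φ : A →L[ℂ] ℂ), Tendsto (fun i => θ i (ts.piStar φ) a) atTop (𝓝 (φ a)))
    {a e : A} (hae : e * a = a * e) (ψ : ts.X →L[ℂ] ℂ) (φ : A →L[ℂ] ℂ) :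
    Tendsto (fun i => θ i (ψ ∘L ts.lsmul a - ψ ∘L ts.rsmul a + ts.piStar (φ ∘L rmulOp A a)) e)
      atTop (𝓝 (φ (e * a))) := by
  have key : ∀ i, θ i (ψ ∘L ts.lsmul a - ψ ∘L ts.rsmul a + ts.piStar (φ ∘L rmulOp A a)) e =
      (θ i (ψ ∘L ts.lsmul a) e - (θ i ψ).comp (lmulOp A a) e) -
        (θ i (ψ ∘L ts.rsmul a) e - (θ i ψ).comp (rmulOp A a) e) +
        θ i (ts.piStar (φ ∘L rmulOp A a)) e := fun i => by
    simp only [map_add, map_sub, add_apply, sub_apply,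
      ContinuousLinearMap.comp_apply, lmulOp, rmulOp, ContinuousLinearMap.mul_apply',
      ContinuousLinearMap.flip_apply, hae]
    ring
  rw [tendsto_congr key]
  simpa only [sub_zero, zero_add, ContinuousLinearMap.comp_apply, rmulOp,
    ContinuousLinearMap.flip_apply, ContinuousLinearMap.mul_apply'] using
    ((hθ a ψ e).2.sub (hθ a ψ e).1).add (hπ e (φ ∘L rmulOp A a))

theorem WstarApproxBimoduleMorphism.zero_mem_closure_image_diagonalDefect
    (hc : HasCentralApproximateIdentity A) (h : WstarApproxBimoduleMorphism A ts)
    {κ : Type*} [Fintype κ] (a : κ → A) (Λ : (κ → ts.X × A) →L[ℂ] ℂ) :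
    (0 : ℂ) ∈ closure (Λ '' Set.range fun m k => ts.diagonalDefect (a k) m) := by
  classical
  obtain ⟨ι, _, _, θ, hθ, hπ⟩ := h
  obtain ⟨ι', _, _, e, he, happrox⟩ := hc
  let ψ : κ → ts.X →L[ℂ] ℂ := fun k =>
    Λ ∘L ContinuousLinearMap.single ℂ (fun _ => ts.X × A) k ∘L ContinuousLinearMap.inl ℂ ts.X A
  let φ : κ → A →L[ℂ] ℂ := fun k =>
    Λ ∘L ContinuousLinearMap.single ℂ (fun _ => ts.X × A) k ∘L ContinuousLinearMap.inr ℂ ts.X A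
  let χ : ts.X →L[ℂ] ℂ :=
    ∑ k, (ψ k ∘L ts.lsmul (a k) - ψ k ∘L ts.rsmul (a k) + ts.piStar (φ k ∘L rmulOp A (a k)))
  let t := ∑ k, φ k (a k)
  have hsplit : ∀ v : κ → ts.X × A, Λ v = ∑ k, (ψ k (v k).1 + φ k (v k).2) := fun v => by
    conv_lhs => rw [← Finset.univ_sum_single v, map_sum]
    refine Finset.sum_congr rfl fun k _ => ?_
    simp [ψ, φ, ← map_add, ← Pi.single_add]
  have hΛ : ∀ m, Λ (fun k => ts.diagonalDefect (a k) m) = χ m - t := fun m => by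
    simp only [TensorSquare.diagonalDefect, hsplit, map_sub, Finset.sum_add_distrib,
      Finset.sum_sub_distrib, TensorSquare.piStar, rmulOp, add_apply, sub_apply, sum_apply,
      ContinuousLinearMap.comp_apply, ContinuousLinearMap.flip_apply,
      ContinuousLinearMap.mul_apply', χ, t]
    ring
  have hδ : ∀ j, Tendsto (fun i => θ i χ (e j)) atTop (𝓝 (∑ k, φ k (e j * a k))) := fun j => by
    simpa only [χ, map_sum, sum_apply] using
      tendsto_finsetSum _ fun k _ => tendsto_wstarApproxMorphism_apply_of_commute hθ hπ (he j (a k)) (ψ k) (φ k)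
  have hj : Tendsto (fun j => ∑ k, φ k (e j * a k)) atTop (𝓝 t) :=
    tendsto_finsetSum _ fun k _ => ((φ k).continuous.tendsto _).comp (happrox (a k)).1
  have ht : t ∈ closure (Set.range fun p : ι × ι' => θ p.1 χ (e p.2)) := by
    rw [← closure_closure]
    exact mem_closure_of_tendsto hj (Eventually.of_forall fun j =>
      mem_closure_of_tendsto (hδ j) (Eventually.of_forall fun i => ⟨(i, j), rfl⟩))
  rw [← sub_self t]
  refine map_mem_closure (f := (· - t)) (continuous_sub_right t) ht ?_
  rintro _ ⟨⟨i, j⟩, rfl⟩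
  obtain ⟨m, hm⟩ := χ.exists_apply_eq_bidual_apply
    ((ContinuousLinearMap.apply ℂ ℂ (e j)).toLinearMap ∘ₗ (θ i).toLinearMap)
  exact ⟨_, ⟨m, rfl⟩, by simp [hΛ, hm]⟩

theorem WstarApproxBimoduleMorphism.exists_forall_norm_diagonalDefect_lt
    (hc : HasCentralApproximateIdentity A) (h : WstarApproxBimoduleMorphism A ts)
    (F : Finset A) {ε : ℝ} (hε : 0 < ε) : ∃ m, ∀ a ∈ F, ‖ts.diagonalDefect a m‖ < ε := by
  have h0 := (ts.convex_range_diagonalDefect (Subtype.val : F → A))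
    |>.zero_mem_closure_of_forall_zero_mem_closure_image (𝕜 := ℂ)
      (h.zero_mem_closure_image_diagonalDefect hc _)
  obtain ⟨_, ⟨m, rfl⟩, hm⟩ := Metric.mem_closure_iff.1 h0 ε hε
  rw [dist_zero_left] at hm
  exact ⟨m, fun a ha => (norm_le_pi_norm _ ⟨a, ha⟩).trans_lt hm⟩

theorem WstarApproxBimoduleMorphism.pseudoAmenable (hc : HasCentralApproximateIdentity A)
    (h : WstarApproxBimoduleMorphism A ts) : ts.PseudoAmenable := by
  classical
  obtain ⟨m, hm⟩ := exists_tendsto_zero_of_forall_finset ts.diagonalDefect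
    fun F _ hε => h.exists_forall_norm_diagonalDefect_lt hc F hε
  refine ⟨Finset A × ℕ, inferInstance, inferInstance, m, fun a => ?_, fun a => ?_⟩
  · exact (hm a).fst_nhds
  · exact tendsto_sub_nhds_zero_iff.1 (hm a).snd_nhds

end Implications

section Statement1

variable (A : Type u) [NonUnitalNormedRing A] [NormedSpace ℂ A]
  [IsScalarTower ℂ A A] [SMulCommClass ℂ A A] [CompleteSpace A]

/-- Theorem 2.4, first part: (i) ⇒ (ii) ⇒ (iii), and if `A` has a central
approximate identity then (iii) ⇒ (i), where (i) is pseudo-amenability of `A`. -/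
theorem pseudoAmenable_implications (ts : TensorSquare A) :
    (ts.PseudoAmenable → ApproxBimoduleMorphismIntoTensor A ts) ∧
    (ApproxBimoduleMorphismIntoTensor A ts → WstarApproxBimoduleMorphism A ts) ∧
    (HasCentralApproximateIdentity A →
      WstarApproxBimoduleMorphism A ts → ts.PseudoAmenable) :=
  ⟨fun h => h.approxBimoduleMorphismIntoTensor, fun h => h.wstarApproxBimoduleMorphism,
    fun hc h => h.pseudoAmenable hc⟩

end Statement1
end
end

section
/- Let B be a Segal algebra in a Banach algebra A, and suppose B contains a net (e_λ) in its centre such that (e_λ²) is an approximate identity for B. If A is approximately biflat, then B is approximately biflat. -/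
noncomputable section

open Filter Topology ComplexConjugate

universe u

/-- An (abstract) Segal algebra `B` in a Banach algebra `A`: a Banach algebra `B` together
with a continuous injective multiplicative embedding with dense range (so `B` is a dense
subalgebra of `A`), a left `A`-module action extending the multiplication (so `B` is a left
ideal in `A`), which is contractive (`‖a·b‖_B ≤ ‖a‖_A ‖b‖_B`) and essential
(`A·B` spans a dense subspace of `B`). -/
structure SegalAlgebraIn (A : Type u) (B : Type u)
    [NonUnitalNormedRing A] [NormedSpace ℂ A] [IsScalarTower ℂ A A] [SMulCommClass ℂ A A]
    [CompleteSpace A]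
    [NonUnitalNormedRing B] [NormedSpace ℂ B] [IsScalarTower ℂ B B] [SMulCommClass ℂ B B]
    [CompleteSpace B] : Type u where
  incl : B →L[ℂ] A
  incl_injective : Function.Injective incl
  incl_mul : ∀ b c : B, incl (b * c) = incl b * incl c
  denseRange : DenseRange incl
  smulA : A →L[ℂ] B →L[ℂ] B
  incl_smulA : ∀ (a : A) (b : B), incl (smulA a b) = a * incl b
  smulA_contractive : ∀ (a : A) (b : B), ‖smulA a b‖ ≤ ‖a‖ * ‖b‖
  essential : Dense (↑(Submodule.span ℂ (Set.range fun p : A × B => smulA p.1 p.2)) : Set B)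

/-!
Fix `e` in the centre of `B`. The map `a ⊗ a' ↦ (a·e) ⊗ (a'·e)` is a bounded map
`T_e : A ⊗̂ A → B ⊗̂ B` which intertwines the `B`-actions with the `A`-actions restricted to `B`,
and satisfies `π_B ∘ T_e = (· e²) ∘ π_A` because `e` is central. Hence for every bimodule
morphism `θ` of `A`, the composite `ψ ↦ θ(ψ ∘ T_e)|_B` is a bimodule morphism of `B` sending
`π_B* φ` to `θ(π_A*(φ(· e²)))|_B`. For a net `θ_δ` witnessing approximate biflatness of `A`
its value at `b` tends to `φ(b e²)` in `δ`, and then to `φ(b)` along the net `e_λ`; Kelley's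
diagonal net over `Λ × Δ^Λ` turns this iterated limit into a single net.
-/

theorem tendsto_atTop_diagonal {Λ Δ X : Type*} [Nonempty Λ] [SemilatticeSup Λ] [Nonempty Δ]
    [SemilatticeSup Δ] [TopologicalSpace X] {x : Λ → Δ → X} {y : Λ → X} {L : X}
    (hx : ∀ l, Tendsto (x l) atTop (𝓝 (y l))) (hy : Tendsto y atTop (𝓝 L)) :
    Tendsto (fun p : Λ × (Λ → Δ) => x p.1 (p.2 p.1)) atTop (𝓝 L) := by
  rw [(nhds_basis_opens L).tendsto_right_iff]
  rintro U ⟨hLU, hU⟩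
  obtain ⟨l₀, hl₀⟩ := eventually_atTop.1 (hy (hU.mem_nhds hLU))
  have hchoice : ∀ l, ∃ d₀ : Δ, ∀ d ≥ d₀, y l ∈ U → x l d ∈ U := by
    intro l
    by_cases hyl : y l ∈ U
    · obtain ⟨d₀, hd₀⟩ := eventually_atTop.1 (hx l (hU.mem_nhds hyl))
      exact ⟨d₀, fun d hd _ => hd₀ d hd⟩
    · exact ⟨Classical.arbitrary Δ, fun _ _ h => absurd h hyl⟩
  choose f₀ hf₀ using hchoice
  exact eventually_atTop.2 ⟨(l₀, f₀), fun p hp => hf₀ _ _ (hp.2 p.1) (hl₀ _ hp.1)⟩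

namespace ProjTensor

variable {E F E' F' : Type u} [NormedAddCommGroup E] [NormedSpace ℂ E]
  [NormedAddCommGroup F] [NormedSpace ℂ F] [NormedAddCommGroup E'] [NormedSpace ℂ E']
  [NormedAddCommGroup F'] [NormedSpace ℂ F']

theorem ext_tmul (pt : ProjTensor E F) {W : Type*} [NormedAddCommGroup W] [NormedSpace ℂ W]
    {f g : pt.X →L[ℂ] W} (h : ∀ a b, f (pt.tmul a b) = g (pt.tmul a b)) : f = g := by
  apply ContinuousLinearMap.ext_on pt.dense_span
  rintro x ⟨⟨a, b⟩, rfl⟩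
  exact h a b

def map (pt : ProjTensor E F) (pt' : ProjTensor E' F') (f : E →L[ℂ] E') (g : F →L[ℂ] F') :
    pt.X →L[ℂ] pt'.X :=
  (pt.lift pt'.X (pt'.tmul.bilinearComp f g)).choose

@[simp]
theorem map_tmul (pt : ProjTensor E F) (pt' : ProjTensor E' F') (f : E →L[ℂ] E')
    (g : F →L[ℂ] F') (x : E) (y : F) :
    pt.map pt' f g (pt.tmul x y) = pt'.tmul (f x) (g y) :=
  (pt.lift pt'.X (pt'.tmul.bilinearComp f g)).choose_spec.2 x y

end ProjTensor

namespace TensorSquare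

variable {A B : Type u} [NonUnitalNormedRing A] [NormedSpace ℂ A] [NonUnitalNormedRing B]
  [NormedSpace ℂ B] (tsA : TensorSquare A) (tsB : TensorSquare B)

theorem approximatelyBiflat_of_iterated_limit [IsScalarTower ℂ A A] [SMulCommClass ℂ A A]
    {Λ Δ : Type u} [Nonempty Λ] [SemilatticeSup Λ] [Nonempty Δ] [SemilatticeSup Δ]
    (Θ : Λ → Δ → (tsA.X →L[ℂ] ℂ) →L[ℂ] (A →L[ℂ] ℂ))
    (hΘ : ∀ l d, tsA.IsBimoduleMorphism (Θ l d))
    (hlim : ∀ (a : A) (φ : A →L[ℂ] ℂ), ∃ y : Λ → ℂ,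
      (∀ l, Tendsto (fun d => Θ l d (tsA.piStar φ) a) atTop (𝓝 (y l))) ∧
        Tendsto y atTop (𝓝 (φ a))) :
    tsA.ApproximatelyBiflat := by
  refine ⟨Λ × (Λ → Δ), inferInstance, inferInstance, fun p => Θ p.1 (p.2 p.1),
    fun p => hΘ _ _, fun a φ => ?_⟩
  obtain ⟨y, hy, hyφ⟩ := hlim a φ
  exact tendsto_atTop_diagonal hy hyφ

section map

variable {j : B →L[ℂ] A} {f : A →L[ℂ] B}

theorem map_comp_rsmul (hf : ∀ a b, f a * b = f (a * j b)) (b : B) :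
    (tsA.map tsB.toProjTensor f f).comp (tsA.rsmul (j b)) =
      (tsB.rsmul b).comp (tsA.map tsB.toProjTensor f f) :=
  tsA.ext_tmul fun x y => by simp [tsA.rsmul_tmul, tsB.rsmul_tmul, hf]

theorem map_comp_lsmul (hf : ∀ b a, b * f a = f (j b * a)) (b : B) :
    (tsA.map tsB.toProjTensor f f).comp (tsA.lsmul (j b)) =
      (tsB.lsmul b).comp (tsA.map tsB.toProjTensor f f) :=
  tsA.ext_tmul fun x y => by simp [tsA.lsmul_tmul, tsB.lsmul_tmul, hf]

theorem mulMap_comp_map {g : A →L[ℂ] B} (hfg : ∀ a a', f a * f a' = g (a * a')) :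
    tsB.mulMap.comp (tsA.map tsB.toProjTensor f f) = g.comp tsA.mulMap :=
  tsA.ext_tmul fun x y => by simp [tsA.mulMap_tmul, tsB.mulMap_tmul, hfg]

end map

def transfer (j : B →L[ℂ] A) (T : tsA.X →L[ℂ] tsB.X)
    (θ : (tsA.X →L[ℂ] ℂ) →L[ℂ] (A →L[ℂ] ℂ)) : (tsB.X →L[ℂ] ℂ) →L[ℂ] (B →L[ℂ] ℂ) :=
  (ContinuousLinearMap.precomp ℂ j).comp (θ.comp (ContinuousLinearMap.precomp ℂ T))

variable {tsA tsB}

@[simp]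
theorem transfer_apply (j : B →L[ℂ] A) (T : tsA.X →L[ℂ] tsB.X)
    (θ : (tsA.X →L[ℂ] ℂ) →L[ℂ] (A →L[ℂ] ℂ)) (ψ : tsB.X →L[ℂ] ℂ) :
    transfer tsA tsB j T θ ψ = (θ (ψ.comp T)).comp j :=
  rfl

theorem isBimoduleMorphism_transfer [IsScalarTower ℂ A A] [SMulCommClass ℂ A A]
    [IsScalarTower ℂ B B] [SMulCommClass ℂ B B] {j : B →L[ℂ] A}
    (hj : ∀ b c, j (b * c) = j b * j c) {T : tsA.X →L[ℂ] tsB.X}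
    (hr : ∀ b, T.comp (tsA.rsmul (j b)) = (tsB.rsmul b).comp T)
    (hl : ∀ b, T.comp (tsA.lsmul (j b)) = (tsB.lsmul b).comp T)
    {θ : (tsA.X →L[ℂ] ℂ) →L[ℂ] (A →L[ℂ] ℂ)} (hθ : tsA.IsBimoduleMorphism θ) :
    tsB.IsBimoduleMorphism (transfer tsA tsB j T θ) := by
  intro b ψ
  constructor <;> ext c <;>
    simp only [transfer_apply, ContinuousLinearMap.comp_apply, rmulOp, lmulOp,
      ContinuousLinearMap.flip_apply, ContinuousLinearMap.mul_apply', hj]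
  · rw [ContinuousLinearMap.comp_assoc ψ, ← hr, ← ContinuousLinearMap.comp_assoc, (hθ _ _).1]
    rfl
  · rw [ContinuousLinearMap.comp_assoc ψ, ← hl, ← ContinuousLinearMap.comp_assoc, (hθ _ _).2]
    rfl

theorem transfer_piStar {j : B →L[ℂ] A} {T : tsA.X →L[ℂ] tsB.X} {g : A →L[ℂ] B}
    (hT : tsB.mulMap.comp T = g.comp tsA.mulMap) (θ : (tsA.X →L[ℂ] ℂ) →L[ℂ] (A →L[ℂ] ℂ))
    (φ : B →L[ℂ] ℂ) :
    transfer tsA tsB j T θ (tsB.piStar φ) = (θ (tsA.piStar (φ.comp g))).comp j := by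
  rw [transfer_apply, piStar, piStar, ContinuousLinearMap.comp_assoc, hT,
    ContinuousLinearMap.comp_assoc]

end TensorSquare

namespace SegalAlgebraIn

variable {A B : Type u} [NonUnitalNormedRing A] [NormedSpace ℂ A] [IsScalarTower ℂ A A]
  [SMulCommClass ℂ A A] [CompleteSpace A] [NonUnitalNormedRing B] [NormedSpace ℂ B]
  [IsScalarTower ℂ B B] [SMulCommClass ℂ B B] [CompleteSpace B] (S : SegalAlgebraIn A B)

theorem smulA_incl (b c : B) : S.smulA (S.incl b) c = b * c :=
  S.incl_injective (by rw [S.incl_smulA, S.incl_mul])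

theorem mul_smulA (b e : B) (a : A) : b * S.smulA a e = S.smulA (S.incl b * a) e :=
  S.incl_injective (by rw [S.incl_mul, S.incl_smulA, S.incl_smulA, mul_assoc])

theorem incl_mul_comm {e : B} (he : ∀ c, e * c = c * e) (a : A) :
    S.incl e * a = a * S.incl e := by
  have : (S.incl e * ·) = (· * S.incl e) :=
    S.denseRange.equalizer (continuous_const_mul _) (continuous_mul_const _)
      (funext fun c => by simp only [Function.comp, ← S.incl_mul, he c])
  exact congrFun this a

theorem smulA_mul {e : B} (he : ∀ c, e * c = c * e) (a : A) (b : B) :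
    S.smulA a e * b = S.smulA (a * S.incl b) e :=
  S.incl_injective (by
    rw [S.incl_mul, S.incl_smulA, S.incl_smulA, mul_assoc, ← S.incl_mul, he, S.incl_mul,
      mul_assoc])

theorem smulA_mul_smulA {e : B} (he : ∀ c, e * c = c * e) (a a' : A) :
    S.smulA a e * S.smulA a' e = S.smulA (a * a') (e * e) :=
  S.incl_injective (by
    rw [S.incl_mul, S.incl_smulA, S.incl_smulA, S.incl_smulA, S.incl_mul, mul_assoc a,
      ← mul_assoc (S.incl e), S.incl_mul_comm he a']
    simp only [mul_assoc])

end SegalAlgebraIn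

/-- Proposition 2.5: let `B` be a Segal algebra in a Banach algebra `A`
containing a net `(e_λ)` in its centre such that `(e_λ²)` is an approximate identity for `B`.
If `A` is approximately biflat, then so is `B`. -/
theorem segalAlgebra_approximatelyBiflat (A B : Type u)
    [NonUnitalNormedRing A] [NormedSpace ℂ A] [IsScalarTower ℂ A A] [SMulCommClass ℂ A A]
    [CompleteSpace A]
    [NonUnitalNormedRing B] [NormedSpace ℂ B] [IsScalarTower ℂ B B] [SMulCommClass ℂ B B]
    [CompleteSpace B]
    (S : SegalAlgebraIn A B) (tsA : TensorSquare A) (tsB : TensorSquare B)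
    (hnet : ∃ (ι : Type u) (ne : Nonempty ι) (sl : SemilatticeSup ι) (e : ι → B),
      letI := ne
      letI := sl
      (∀ (i : ι) (c : B), e i * c = c * e i) ∧
        ∀ b : B, Tendsto (fun i => e i * e i * b) atTop (𝓝 b) ∧
          Tendsto (fun i => b * (e i * e i)) atTop (𝓝 b))
    (hA : tsA.ApproximatelyBiflat) : tsB.ApproximatelyBiflat := by
  obtain ⟨Λ, _, _, e, hcent, happrox⟩ := hnet
  obtain ⟨Δ, _, _, θ, hθ, hθlim⟩ := hA
  let f : Λ → A →L[ℂ] B := fun l => S.smulA.flip (e l)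
  let T : Λ → tsA.X →L[ℂ] tsB.X := fun l => tsA.map tsB.toProjTensor (f l) (f l)
  refine tsB.approximatelyBiflat_of_iterated_limit
    (fun l d => TensorSquare.transfer tsA tsB S.incl (T l) (θ d))
    (fun l d => TensorSquare.isBimoduleMorphism_transfer S.incl_mul
      (tsA.map_comp_rsmul tsB fun a b => S.smulA_mul (hcent l) a b)
      (tsA.map_comp_lsmul tsB fun b a => S.mul_smulA b (e l) a) (hθ d))
    fun b φ => ⟨fun l => φ (b * (e l * e l)), fun l => ?_,
      (φ.continuous.tendsto b).comp (happrox b).2⟩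
  have hπ : tsB.mulMap.comp (T l) = (S.smulA.flip (e l * e l)).comp tsA.mulMap :=
    tsA.mulMap_comp_map tsB (S.smulA_mul_smulA (hcent l))
  simpa [TensorSquare.transfer_piStar hπ, S.smulA_incl] using
    hθlim (S.incl b) (φ.comp (S.smulA.flip (e l * e l)))
end
end

section
/- Let A be a Banach algebra containing a directed family of closed ideals {A_γ : γ ∈ Γ} such that for each γ there is a bounded homomorphic projection P_γ of A onto A_γ. Suppose that either (i) A has a central approximate identity (e_λ) contained in the union of the A_γ, or (ii) ‖P_γ a − a‖ → 0 for each a ∈ A. If each A_γ is approximately biflat, then A is approximately biflat. -/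
noncomputable section

open Filter Topology ComplexConjugate

universe u

/-!
Since `A` acts on the ideal `A_γ` through the homomorphism `P_γ`, the approximate biflatness
net of `A_γ`, transported along `A_γ ⊗̂ A_γ → A ⊗̂ A` and `P_γ`, is a net of `A`-bimodule
morphisms `θ_δ` with `θ_δ ∘ π* → P_γ*`. Relative approximate biflatness
(`θ_δ ∘ π* → R*`) is stable under pointwise limits of `R`, and under `R ↦ R ∘ (e * ·)` for
central `e`. Under (ii) the maps `P_γ` converge pointwise to the identity along the directed
family; under (i) the maps `a ↦ P_γ (e_λ a) = e_λ a`, with `e_λ ∈ A_γ`, do.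
-/

theorem ContinuousLinearMap.exists_comp_eq_of_range_subset {𝕜 E F G : Type*}
    [NontriviallyNormedField 𝕜] [NormedAddCommGroup E] [NormedSpace 𝕜 E]
    [NormedAddCommGroup F] [NormedSpace 𝕜 F] [NormedAddCommGroup G] [NormedSpace 𝕜 G]
    (f : F →L[𝕜] G) (hf : ∀ x, ‖f x‖ = ‖x‖) (g : E →L[𝕜] G)
    (hg : Set.range g ⊆ Set.range f) : ∃ h : E →L[𝕜] F, ∀ x, f (h x) = g x := by
  let fᵢ : F →ₗᵢ[𝕜] G := ⟨f.toLinearMap, hf⟩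
  let g' : E →L[𝕜] LinearMap.range fᵢ.toLinearMap := g.codRestrict _ fun x => hg ⟨x, rfl⟩
  refine ⟨(fᵢ.equivRange.symm.toContinuousLinearEquiv : _ →L[𝕜] F).comp g', fun x => ?_⟩
  exact congrArg Subtype.val (fᵢ.equivRange.apply_symm_apply (g' x))

namespace ProjTensor

variable {E F : Type u} [NormedAddCommGroup E] [NormedSpace ℂ E]
  [NormedAddCommGroup F] [NormedSpace ℂ F] (t : ProjTensor E F)

theorem ext_tmul_s4 {G : Type*} [NormedAddCommGroup G] [NormedSpace ℂ G] {f g : t.X →L[ℂ] G}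
    (h : ∀ e e', f (t.tmul e e') = g (t.tmul e e')) : f = g :=
  ContinuousLinearMap.ext_on t.dense_span (by rintro _ ⟨⟨e, e'⟩, rfl⟩; exact h e e')

theorem exists_map_tmul {E' F' : Type u} [NormedAddCommGroup E'] [NormedSpace ℂ E']
    [NormedAddCommGroup F'] [NormedSpace ℂ F'] (t' : ProjTensor E' F')
    (f : E →L[ℂ] E') (g : F →L[ℂ] F') :
    ∃ T : t.X →L[ℂ] t'.X, ∀ e e', T (t.tmul e e') = t'.tmul (f e) (g e') :=
  let ⟨T, _, hT⟩ := t.lift t'.X ((t'.tmul.comp f).flip.comp g).flip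
  ⟨T, hT⟩

end ProjTensor

namespace TensorSquare

section Relative

variable {A : Type u} [NonUnitalNormedRing A] [NormedSpace ℂ A] [IsScalarTower ℂ A A]
  [SMulCommClass ℂ A A] (ts : TensorSquare A)

/-- `θ_δ ∘ π* → R*` in the weak* operator topology, for a net of bounded `A`-bimodule
morphisms `θ_δ`. -/
def ApproximatelyBiflatAlong (R : A → A) : Prop :=
  ∃ (ι : Type u) (ne : Nonempty ι) (sl : SemilatticeSup ι)
    (θ : ι → ((ts.X →L[ℂ] ℂ) →L[ℂ] (A →L[ℂ] ℂ))),
    letI := ne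
    letI := sl
    (∀ i, ts.IsBimoduleMorphism (θ i)) ∧
      ∀ (a : A) (φ : A →L[ℂ] ℂ),
        Tendsto (fun i => θ i (ts.piStar φ) a) atTop (𝓝 (φ (R a)))

theorem approximatelyBiflatAlong_id_iff :
    ts.ApproximatelyBiflatAlong id ↔ ts.ApproximatelyBiflat :=
  Iff.rfl

variable {ts}

theorem ApproximatelyBiflatAlong.exists_dist_lt {R : A → A} (h : ts.ApproximatelyBiflatAlong R)
    (F : Finset (A × (A →L[ℂ] ℂ))) {ε : ℝ} (hε : 0 < ε) :
    ∃ θ, ts.IsBimoduleMorphism θ ∧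
      ∀ p ∈ F, dist (θ (ts.piStar p.2) p.1) (p.2 (R p.1)) < ε := by
  obtain ⟨ι, _, _, θ, hθ, hlim⟩ := h
  have hclose : ∀ᶠ i in atTop, ∀ p ∈ F, dist (θ i (ts.piStar p.2) p.1) (p.2 (R p.1)) < ε :=
    (eventually_all_finset F).2 fun p _ => Metric.tendsto_nhds.1 (hlim p.1 p.2) ε hε
  obtain ⟨i, hi⟩ := hclose.exists
  exact ⟨θ i, hθ i, hi⟩

variable (ts) in
theorem approximatelyBiflatAlong_of_forall_exists_dist_lt {R : A → A}
    (h : ∀ (F : Finset (A × (A →L[ℂ] ℂ))) (ε : ℝ), 0 < ε → ∃ θ, ts.IsBimoduleMorphism θ ∧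
      ∀ p ∈ F, dist (θ (ts.piStar p.2) p.1) (p.2 (R p.1)) < ε) :
    ts.ApproximatelyBiflatAlong R := by
  classical
  choose θ hθ hclose using fun Fn : Finset (A × (A →L[ℂ] ℂ)) × ℕ =>
    h Fn.1 (1 / (Fn.2 + 1)) Nat.one_div_pos_of_nat
  refine ⟨Finset (A × (A →L[ℂ] ℂ)) × ℕ, inferInstance, inferInstance, θ, hθ, fun a φ => ?_⟩
  refine Metric.tendsto_atTop.2 fun ε hε => ?_
  obtain ⟨n, hn⟩ := exists_nat_one_div_lt hε
  refine ⟨({(a, φ)}, n), fun ⟨F, m⟩ hFm => ?_⟩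
  calc _ < 1 / (m + 1 : ℝ) := hclose (F, m) (a, φ) (hFm.1 (Finset.mem_singleton_self _))
    _ ≤ 1 / (n + 1) := Nat.one_div_le_one_div hFm.2
    _ < ε := hn

theorem ApproximatelyBiflatAlong.of_tendsto {K : Type*} {l : Filter K} [l.NeBot]
    {R : K → A → A} {R₀ : A → A} (h : ∀ k, ts.ApproximatelyBiflatAlong (R k))
    (hR : ∀ a, Tendsto (fun k => R k a) l (𝓝 (R₀ a))) : ts.ApproximatelyBiflatAlong R₀ := by
  refine ts.approximatelyBiflatAlong_of_forall_exists_dist_lt fun F ε hε => ?_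
  have hnear : ∀ᶠ k in l, ∀ p ∈ F, dist (p.2 (R k p.1)) (p.2 (R₀ p.1)) < ε / 2 :=
    (eventually_all_finset F).2 fun p _ =>
      Metric.tendsto_nhds.1 ((p.2.continuous.tendsto _).comp (hR p.1)) _ (half_pos hε)
  obtain ⟨k, hk⟩ := hnear.exists
  obtain ⟨θ, hθ, hclose⟩ := (h k).exists_dist_lt F (half_pos hε)
  refine ⟨θ, hθ, fun p hp => ?_⟩
  calc _ ≤ dist (θ (ts.piStar p.2) p.1) (p.2 (R k p.1)) + dist (p.2 (R k p.1)) (p.2 (R₀ p.1)) :=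
        dist_triangle _ _ _
    _ < ε / 2 + ε / 2 := add_lt_add (hclose p hp) (hk p hp)
    _ = ε := add_halves ε

theorem ApproximatelyBiflatAlong.comp_mul_left {R : A → A} (h : ts.ApproximatelyBiflatAlong R)
    {e : A} (he : ∀ a, e * a = a * e) : ts.ApproximatelyBiflatAlong fun a => R (e * a) := by
  obtain ⟨ι, ne, sl, θ, hθ, hlim⟩ := h
  let L := (ContinuousLinearMap.compL ℂ A A ℂ).flip (lmulOp A e)
  refine ⟨ι, ne, sl, fun i => L.comp (θ i), fun i a ψ => ⟨?_, ?_⟩, fun a φ => hlim (e * a) φ⟩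
  · ext x
    change θ i (ψ.comp (ts.rsmul a)) (e * x) = θ i ψ (e * (x * a))
    rw [(hθ i a ψ).1]
    exact congrArg (θ i ψ) (mul_assoc e x a)
  · ext x
    change θ i (ψ.comp (ts.lsmul a)) (e * x) = θ i ψ (e * (a * x))
    rw [(hθ i a ψ).2]
    change θ i ψ (a * (e * x)) = θ i ψ (e * (a * x))
    rw [← mul_assoc, ← mul_assoc, he]

end Relative

section Transfer

variable {A B : Type u} [NonUnitalNormedRing A] [NormedSpace ℂ A] [IsScalarTower ℂ A A]
  [SMulCommClass ℂ A A] [NonUnitalNormedRing B] [NormedSpace ℂ B]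
  [IsScalarTower ℂ B B] [SMulCommClass ℂ B B]
  {tsB : TensorSquare B} (tsA : TensorSquare A)

/-- `hright`, `hleft`: `j(B)` is an ideal of `A` on which `A` acts through `q`. -/
theorem ApproximatelyBiflat.approximatelyBiflatAlong_comp (h : tsB.ApproximatelyBiflat)
    (j : B →L[ℂ] A) (q : A →L[ℂ] B) (hj : ∀ b c, j (b * c) = j b * j c)
    (hq : ∀ a a', q (a * a') = q a * q a') (hright : ∀ b a, j b * a = j (b * q a))
    (hleft : ∀ a b, a * j b = j (q a * b)) : tsA.ApproximatelyBiflatAlong (j ∘ q) := by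
  obtain ⟨T, hT⟩ := tsB.exists_map_tmul tsA.toProjTensor j j
  have hT_rsmul : ∀ a, (tsA.rsmul a).comp T = T.comp (tsB.rsmul (q a)) := fun a =>
    tsB.ext_tmul_s4 fun b c => by
      simp only [ContinuousLinearMap.comp_apply, hT, rsmul_tmul, hright]
  have hT_lsmul : ∀ a, (tsA.lsmul a).comp T = T.comp (tsB.lsmul (q a)) := fun a =>
    tsB.ext_tmul_s4 fun b c => by
      simp only [ContinuousLinearMap.comp_apply, hT, lsmul_tmul, hleft]
  have hT_piStar : ∀ φ, (tsA.piStar φ).comp T = tsB.piStar (φ.comp j) := fun φ =>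
    tsB.ext_tmul_s4 fun b c => by
      simp only [piStar, ContinuousLinearMap.comp_apply, hT, mulMap_tmul, hj]
  obtain ⟨ι, ne, sl, θ, hθ, hlim⟩ := h
  let Θ : ι → (tsA.X →L[ℂ] ℂ) →L[ℂ] (A →L[ℂ] ℂ) := fun i =>
    ((ContinuousLinearMap.compL ℂ A B ℂ).flip q).comp
      ((θ i).comp ((ContinuousLinearMap.compL ℂ tsB.X tsA.X ℂ).flip T))
  refine ⟨ι, ne, sl, Θ, fun i a ψ => ⟨?_, ?_⟩, fun a φ => ?_⟩
  · ext x
    change θ i ((ψ.comp (tsA.rsmul a)).comp T) (q x) = θ i (ψ.comp T) (q (x * a))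
    rw [ContinuousLinearMap.comp_assoc, hT_rsmul, ← ContinuousLinearMap.comp_assoc,
      (hθ i (q a) (ψ.comp T)).1, hq]
    rfl
  · ext x
    change θ i ((ψ.comp (tsA.lsmul a)).comp T) (q x) = θ i (ψ.comp T) (q (a * x))
    rw [ContinuousLinearMap.comp_assoc, hT_lsmul, ← ContinuousLinearMap.comp_assoc,
      (hθ i (q a) (ψ.comp T)).2, hq]
    rfl
  · change Tendsto (fun i => θ i ((tsA.piStar φ).comp T) (q a)) atTop (𝓝 (φ (j (q a))))
    rw [hT_piStar]
    exact hlim (q a) (φ.comp j)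

theorem ApproximatelyBiflat.approximatelyBiflatAlong_projection (h : tsB.ApproximatelyBiflat)
    (j : B →L[ℂ] A) (hj_isometry : ∀ b, ‖j b‖ = ‖b‖) (hj_mul : ∀ b c, j (b * c) = j b * j c)
    (hj_ideal : ∀ a b, a * j b ∈ Set.range j ∧ j b * a ∈ Set.range j)
    (P : A →L[ℂ] A) (hP_mul : ∀ a b, P (a * b) = P a * P b)
    (hP_range : Set.range P ⊆ Set.range j) (hP_proj : ∀ b, P (j b) = j b) :
    tsA.ApproximatelyBiflatAlong P := by
  obtain ⟨q, hq⟩ := j.exists_comp_eq_of_range_subset hj_isometry P hP_range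
  have hj_inj : Function.Injective j :=
    (AddMonoidHomClass.isometry_of_norm j hj_isometry).injective
  have hP_fix : ∀ x ∈ Set.range j, P x = x := by
    rintro _ ⟨b, rfl⟩
    exact hP_proj b
  have hq_mul : ∀ a a', q (a * a') = q a * q a' := fun a a' =>
    hj_inj (by rw [hq, hj_mul, hq, hq, hP_mul])
  have hright : ∀ b a, j b * a = j (b * q a) := fun b a => by
    rw [← hP_fix _ (hj_ideal a b).2, hP_mul, hP_proj, hj_mul, hq]
  have hleft : ∀ a b, a * j b = j (q a * b) := fun a b => by
    rw [← hP_fix _ (hj_ideal a b).1, hP_mul, hP_proj, hj_mul, hq]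
  have hjq : ⇑j ∘ ⇑q = ⇑P := funext hq
  rw [← hjq]
  exact h.approximatelyBiflatAlong_comp tsA j q hj_mul hq_mul hright hleft

end Transfer

end TensorSquare

open TensorSquare

theorem directedUnion_approximatelyBiflat_general
    (A : Type u) [NonUnitalNormedRing A] [NormedSpace ℂ A] [IsScalarTower ℂ A A]
    [SMulCommClass ℂ A A] (tsA : TensorSquare A)
    (Γ : Type u) (B : Γ → Type u) [∀ γ, NonUnitalNormedRing (B γ)]
    [∀ γ, NormedSpace ℂ (B γ)] [∀ γ, IsScalarTower ℂ (B γ) (B γ)]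
    [∀ γ, SMulCommClass ℂ (B γ) (B γ)]
    (j : ∀ γ, B γ →L[ℂ] A)
    (hj_isometry : ∀ (γ) (b : B γ), ‖j γ b‖ = ‖b‖)
    (hj_mul : ∀ (γ) (b c : B γ), j γ (b * c) = j γ b * j γ c)
    (hj_ideal : ∀ (γ) (a : A) (b : B γ),
      a * j γ b ∈ Set.range (j γ) ∧ j γ b * a ∈ Set.range (j γ))
    (hdirected : ∀ γ₁ γ₂ : Γ, ∃ γ₃, Set.range (j γ₁) ∪ Set.range (j γ₂) ⊆ Set.range (j γ₃))
    (P : Γ → (A →L[ℂ] A))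
    (hP_mul : ∀ (γ) (a b : A), P γ (a * b) = P γ a * P γ b)
    (hP_range : ∀ γ, Set.range (P γ) = Set.range (j γ))
    (hP_proj : ∀ (γ) (b : B γ), P γ (j γ b) = j γ b)
    (tsB : ∀ γ, TensorSquare (B γ))
    (hbiflat : ∀ γ, (tsB γ).ApproximatelyBiflat)
    (hcase :
      (∃ (ι : Type u) (ne : Nonempty ι) (sl : SemilatticeSup ι) (e : ι → A),
        letI := ne
        letI := sl
        (∀ i, e i ∈ ⋃ γ, Set.range (j γ)) ∧ (∀ (i) (a : A), e i * a = a * e i) ∧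
          ∀ a : A, Tendsto (fun i => e i * a) atTop (𝓝 a) ∧
            Tendsto (fun i => a * e i) atTop (𝓝 a)) ∨
      (∀ a : A, ∀ ε > (0 : ℝ), ∃ γ, ∀ γ',
        Set.range (j γ) ⊆ Set.range (j γ') → ‖P γ' a - a‖ < ε)) :
    tsA.ApproximatelyBiflat := by
  have hP : ∀ γ, tsA.ApproximatelyBiflatAlong (P γ) := fun γ =>
    (hbiflat γ).approximatelyBiflatAlong_projection tsA (j γ) (hj_isometry γ) (hj_mul γ)
      (hj_ideal γ) (P γ) (hP_mul γ) (hP_range γ).subset (hP_proj γ)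
  rw [← approximatelyBiflatAlong_id_iff]
  rcases hcase with ⟨ι, _, _, e, he_mem, he_central, he⟩ | hP_tendsto
  · choose γ b hb using fun i => Set.mem_iUnion.1 (he_mem i)
    have hPe : ∀ i a, P (γ i) (e i * a) = e i * a := by
      intro i a
      obtain ⟨c, hc⟩ := (hj_ideal (γ i) a (b i)).2
      rw [← hb, ← hc, hP_proj]
    refine ApproximatelyBiflatAlong.of_tendsto (l := atTop) (R := fun i a => e i * a)
      (fun i => ?_) fun a => (he a).1
    simpa only [hPe] using (hP (γ i)).comp_mul_left (he_central i)
  · have : Nonempty Γ := ⟨(hP_tendsto 0 1 one_pos).choose⟩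
    let _ : Preorder Γ := Preorder.lift fun γ => Set.range (j γ)
    have : IsDirectedOrder Γ := ⟨fun γ₁ γ₂ =>
      let ⟨γ₃, h⟩ := hdirected γ₁ γ₂
      ⟨γ₃, Set.subset_union_left.trans h, Set.subset_union_right.trans h⟩⟩
    refine ApproximatelyBiflatAlong.of_tendsto (l := atTop) hP fun a =>
      Metric.tendsto_nhds.2 fun ε hε => eventually_atTop.2 ?_
    obtain ⟨γ, hγ⟩ := hP_tendsto a ε hε
    exact ⟨γ, fun γ' hγ' => (dist_eq_norm _ _).trans_lt (hγ γ' hγ')⟩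

/-- Proposition 2.7(a): let `A` be a Banach algebra containing a directed
family of closed ideals `{A_γ}` (realized here as isometrically embedded Banach algebras
`B γ`), with bounded homomorphic projections `P γ` of `A` onto `A_γ`.  If (i) `A` has a
central approximate identity contained in `⋃ γ, A_γ`, or (ii) `‖P γ a - a‖ → 0` for each
`a ∈ A` (along the directed family), and each `A_γ` is approximately biflat, then `A` is
approximately biflat. -/
theorem directedUnion_approximatelyBiflat
    (A : Type u) [NonUnitalNormedRing A] [NormedSpace ℂ A] [IsScalarTower ℂ A A]
    [SMulCommClass ℂ A A] [CompleteSpace A] (tsA : TensorSquare A)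
    (Γ : Type u) (B : Γ → Type u) [∀ γ, NonUnitalNormedRing (B γ)]
    [∀ γ, NormedSpace ℂ (B γ)] [∀ γ, IsScalarTower ℂ (B γ) (B γ)]
    [∀ γ, SMulCommClass ℂ (B γ) (B γ)] [∀ γ, CompleteSpace (B γ)]
    (j : ∀ γ, B γ →L[ℂ] A)
    (hj_isometry : ∀ (γ) (b : B γ), ‖j γ b‖ = ‖b‖)
    (hj_mul : ∀ (γ) (b c : B γ), j γ (b * c) = j γ b * j γ c)
    (hj_ideal : ∀ (γ) (a : A) (b : B γ),
      a * j γ b ∈ Set.range (j γ) ∧ j γ b * a ∈ Set.range (j γ))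
    (hdirected : ∀ γ₁ γ₂ : Γ, ∃ γ₃, Set.range (j γ₁) ∪ Set.range (j γ₂) ⊆ Set.range (j γ₃))
    (P : Γ → (A →L[ℂ] A))
    (hP_mul : ∀ (γ) (a b : A), P γ (a * b) = P γ a * P γ b)
    (hP_range : ∀ γ, Set.range (P γ) = Set.range (j γ))
    (hP_proj : ∀ (γ) (b : B γ), P γ (j γ b) = j γ b)
    (tsB : ∀ γ, TensorSquare (B γ))
    (hbiflat : ∀ γ, (tsB γ).ApproximatelyBiflat)
    (hcase :
      (∃ (ι : Type u) (ne : Nonempty ι) (sl : SemilatticeSup ι) (e : ι → A),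
        letI := ne
        letI := sl
        (∀ i, e i ∈ ⋃ γ, Set.range (j γ)) ∧ (∀ (i) (a : A), e i * a = a * e i) ∧
          ∀ a : A, Tendsto (fun i => e i * a) atTop (𝓝 a) ∧
            Tendsto (fun i => a * e i) atTop (𝓝 a)) ∨
      (∀ a : A, ∀ ε > (0 : ℝ), ∃ γ, ∀ γ',
        Set.range (j γ) ⊆ Set.range (j γ') → ‖P γ' a - a‖ < ε)) :
    tsA.ApproximatelyBiflat :=
  directedUnion_approximatelyBiflat_general A tsA Γ B j hj_isometry hj_mul hj_ideal hdirected P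
    hP_mul hP_range hP_proj tsB hbiflat hcase
end
end

section
/- Let A be a Banach algebra containing a directed family of closed ideals {A_γ : γ ∈ Γ} such that for each γ there is a bounded homomorphic projection P_γ of A onto A_γ. Suppose each A_γ is biflat with sup_γ BF_{A_γ} < ∞, and suppose that either A has a central approximate identity contained in the union of the A_γ which is bounded in the multiplier norm of A, or ‖P_γ a − a‖ → 0 for each a ∈ A with sup_γ ‖P_γ‖ < ∞. Then A is biflat. -/
noncomputable section

open Filter Topology ComplexConjugate

universe u

/-- `A` is biflat with a witnessing bimodule morphism of norm at most `C`
(so the biflatness constant `BF_A` is at most `C`). -/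
def TensorSquare.BiflatWithBound {A : Type u} [NonUnitalNormedRing A] [NormedSpace ℂ A]
    [IsScalarTower ℂ A A] [SMulCommClass ℂ A A] [CompleteSpace A]
    (ts : TensorSquare A) (C : ℝ) : Prop :=
  ∃ θ : (ts.X →L[ℂ] ℂ) →L[ℂ] (A →L[ℂ] ℂ),
    ‖θ‖ ≤ C ∧ ts.IsBimoduleMorphism θ ∧ ∀ φ : A →L[ℂ] ℂ, θ (ts.piStar φ) = φ

/-! A biflat `A_γ` with bimodule morphism `θ_γ` induces `Θ_γ ψ = θ_γ (ψ ∘ T_γ) ∘ R_γ` on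
`(A ⊗̂ A)*`, where `T_γ : A_γ ⊗̂ A_γ → A ⊗̂ A` is induced by the inclusion and `R_γ : A → A_γ`
is `P_γ`, or `a ↦ e a` for a member `e` of the approximate identity. Since `R_γ a → a` and
`R_γ` is multiplicative up to an error that vanishes in the limit, the `Θ_γ` are uniformly
bounded, are bimodule morphisms up to vanishing errors, and satisfy `Θ_γ (π* φ) = φ ∘ R_γ → φ`.
A pointwise limit of the `Θ_γ` along an ultrafilter, which exists because the values lie in
compact discs, is then a bimodule morphism `θ` with `θ ∘ π* = id`. -/

theorem ContinuousLinearMap.exists_lift_of_isometry {𝕜 E F G : Type*} [NontriviallyNormedField 𝕜]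
    [SeminormedAddCommGroup E] [NormedSpace 𝕜 E] [NormedAddCommGroup F] [NormedSpace 𝕜 F]
    [SeminormedAddCommGroup G] [NormedSpace 𝕜 G] (j : F →L[𝕜] G) (hj : ∀ x, ‖j x‖ = ‖x‖)
    (f : E →L[𝕜] G) (hf : ∀ x, f x ∈ Set.range j) :
    ∃ R : E →L[𝕜] F, ∀ x, j (R x) = f x := by
  choose r hr using hf
  have hinj : Function.Injective j := (AddMonoidHomClass.isometry_of_norm j hj).injective
  refine ⟨LinearMap.mkContinuous
    { toFun := r
      map_add' := fun x y => hinj (by simp only [map_add, hr])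
      map_smul' := fun c x => hinj (by simp only [map_smul, hr, RingHom.id_apply]) }
    ‖f‖ fun x => ?_, hr⟩
  simpa only [LinearMap.coe_mk, AddHom.coe_mk, ← hj, hr] using f.le_opNorm x

theorem ContinuousLinearMap.opNorm_le_one_of_isometry {𝕜 F G : Type*} [NontriviallyNormedField 𝕜]
    [SeminormedAddCommGroup F] [NormedSpace 𝕜 F] [SeminormedAddCommGroup G] [NormedSpace 𝕜 G]
    (j : F →L[𝕜] G) (hj : ∀ x, ‖j x‖ = ‖x‖) : ‖j‖ ≤ 1 :=
  j.opNorm_le_bound zero_le_one fun x => by rw [hj, one_mul]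

theorem ContinuousLinearMap.exists_tendsto_apply_apply_of_norm_le_s5 {𝕜 E F G ι : Type*}
    [NontriviallyNormedField 𝕜] [SeminormedAddCommGroup E] [NormedSpace 𝕜 E]
    [SeminormedAddCommGroup F] [NormedSpace 𝕜 F] [NormedAddCommGroup G] [NormedSpace 𝕜 G]
    [ProperSpace G] (U : Ultrafilter ι) (Θ : ι → E →L[𝕜] F →L[𝕜] G) (K : ℝ)
    (hΘ : ∀ i x y, ‖Θ i x y‖ ≤ K * ‖x‖ * ‖y‖) :
    ∃ θ : E →L[𝕜] F →L[𝕜] G, ∀ x y, Tendsto (fun i => Θ i x y) U (𝓝 (θ x y)) := by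
  have hlim : ∀ x y, ∃ c, Tendsto (fun i => Θ i x y) U (𝓝 c) := fun x y => by
    obtain ⟨c, -, hc⟩ := (isCompact_closedBall (0 : G) (K * ‖x‖ * ‖y‖)).ultrafilter_le_nhds
      (U.map fun i => Θ i x y)
      (tendsto_principal.2 (.of_forall fun i => mem_closedBall_zero_iff.2 (hΘ i x y)))
    exact ⟨c, hc⟩
  choose L hL using hlim
  let L₂ : E →ₗ[𝕜] F →ₗ[𝕜] G := LinearMap.mk₂ 𝕜 L
    (fun x x' y => tendsto_nhds_unique (hL _ y) (by simpa using (hL x y).add (hL x' y)))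
    (fun c x y => tendsto_nhds_unique (hL _ y) (by simpa using (hL x y).const_smul c))
    (fun x y y' => tendsto_nhds_unique (hL x _) (by simpa using (hL x y).add (hL x y')))
    (fun c x y => tendsto_nhds_unique (hL x _) (by simpa using (hL x y).const_smul c))
  exact ⟨L₂.mkContinuous₂ K fun x y =>
    le_of_tendsto' (hL x y).norm (hΘ · x y), hL⟩

@[simp]
theorem lmulOp_apply {A : Type u} [NonUnitalNormedRing A] [NormedSpace ℂ A]
    [IsScalarTower ℂ A A] [SMulCommClass ℂ A A] (a b : A) : lmulOp A a b = a * b := rfl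

@[simp]
theorem rmulOp_apply {A : Type u} [NonUnitalNormedRing A] [NormedSpace ℂ A]
    [IsScalarTower ℂ A A] [SMulCommClass ℂ A A] (a b : A) : rmulOp A a b = b * a := rfl

theorem ProjTensor.ext_tmul_s5 {E F W : Type u} [NormedAddCommGroup E] [NormedSpace ℂ E]
    [NormedAddCommGroup F] [NormedSpace ℂ F] [NormedAddCommGroup W] [NormedSpace ℂ W]
    (pt : ProjTensor E F) {f g : pt.X →L[ℂ] W} (h : ∀ e e', f (pt.tmul e e') = g (pt.tmul e e')) :
    f = g :=
  ContinuousLinearMap.ext_on pt.dense_span fun _ ⟨p, hp⟩ => hp ▸ h p.1 p.2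

def ContinuousLinearMap.dualSandwich {𝕜 E F X Y : Type*} [NontriviallyNormedField 𝕜]
    [SeminormedAddCommGroup E] [NormedSpace 𝕜 E] [SeminormedAddCommGroup F] [NormedSpace 𝕜 F]
    [SeminormedAddCommGroup X] [NormedSpace 𝕜 X] [SeminormedAddCommGroup Y] [NormedSpace 𝕜 Y]
    (θ : (Y →L[𝕜] 𝕜) →L[𝕜] F →L[𝕜] 𝕜) (T : Y →L[𝕜] X) (R : E →L[𝕜] F) :
    (X →L[𝕜] 𝕜) →L[𝕜] E →L[𝕜] 𝕜 :=
  (ContinuousLinearMap.compL 𝕜 E F 𝕜).flip R ∘L θ ∘L (ContinuousLinearMap.compL 𝕜 Y X 𝕜).flip T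

@[simp]
theorem ContinuousLinearMap.dualSandwich_apply {𝕜 E F X Y : Type*} [NontriviallyNormedField 𝕜]
    [SeminormedAddCommGroup E] [NormedSpace 𝕜 E] [SeminormedAddCommGroup F] [NormedSpace 𝕜 F]
    [SeminormedAddCommGroup X] [NormedSpace 𝕜 X] [SeminormedAddCommGroup Y] [NormedSpace 𝕜 Y]
    (θ : (Y →L[𝕜] 𝕜) →L[𝕜] F →L[𝕜] 𝕜) (T : Y →L[𝕜] X) (R : E →L[𝕜] F)
    (ψ : X →L[𝕜] 𝕜) (x : E) : θ.dualSandwich T R ψ x = θ (ψ.comp T) (R x) := rfl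

theorem ContinuousLinearMap.norm_dualSandwich_apply_le {𝕜 E F X Y : Type*}
    [NontriviallyNormedField 𝕜] [SeminormedAddCommGroup E] [NormedSpace 𝕜 E]
    [SeminormedAddCommGroup F] [NormedSpace 𝕜 F] [SeminormedAddCommGroup X] [NormedSpace 𝕜 X]
    [SeminormedAddCommGroup Y] [NormedSpace 𝕜 Y] (θ : (Y →L[𝕜] 𝕜) →L[𝕜] F →L[𝕜] 𝕜)
    (T : Y →L[𝕜] X) (R : E →L[𝕜] F) (ψ : X →L[𝕜] 𝕜) (x : E) :
    ‖θ.dualSandwich T R ψ x‖ ≤ ‖θ‖ * ‖ψ‖ * ‖T‖ * ‖R x‖ :=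
  calc ‖θ (ψ.comp T) (R x)‖ ≤ ‖θ‖ * ‖ψ.comp T‖ * ‖R x‖ := θ.le_opNorm₂ _ _
    _ ≤ ‖θ‖ * (‖ψ‖ * ‖T‖) * ‖R x‖ := by gcongr; exact ψ.opNorm_comp_le T
    _ = ‖θ‖ * ‖ψ‖ * ‖T‖ * ‖R x‖ := by ring

namespace TensorSquare

section

variable {A B : Type u} [NonUnitalNormedRing A] [NormedSpace ℂ A]
  [NonUnitalNormedRing B] [NormedSpace ℂ B] (tsA : TensorSquare A) (tsB : TensorSquare B)

theorem rsmul_sub (a b : A) : tsA.rsmul (a - b) = tsA.rsmul a - tsA.rsmul b :=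
  tsA.ext_tmul_s5 fun e e' => by
    simp only [sub_apply, rsmul_tmul, mul_sub, map_sub]

theorem lsmul_sub (a b : A) : tsA.lsmul (a - b) = tsA.lsmul a - tsA.lsmul b :=
  tsA.ext_tmul_s5 fun e e' => by
    simp only [sub_apply, lsmul_tmul, sub_mul, map_sub]

theorem norm_rsmul_le (a : A) : ‖tsA.rsmul a‖ ≤ ‖a‖ :=
  ContinuousLinearMap.opNorm_le_bound _ (norm_nonneg a) (tsA.rsmul_norm_le a)

theorem norm_lsmul_le (a : A) : ‖tsA.lsmul a‖ ≤ ‖a‖ :=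
  ContinuousLinearMap.opNorm_le_bound _ (norm_nonneg a) (tsA.lsmul_norm_le a)

theorem exists_map_tmul (j : B →L[ℂ] A) :
    ∃ T : tsB.X →L[ℂ] tsA.X, ‖T‖ ≤ ‖j‖ * ‖j‖ ∧
      ∀ b c, T (tsB.tmul b c) = tsA.tmul (j b) (j c) := by
  obtain ⟨T, hT_norm, hT⟩ := tsB.lift tsA.X (tsA.tmul.bilinearComp j j)
  refine ⟨T, hT_norm.trans <| ContinuousLinearMap.opNorm_le_bound₂ _ (by positivity)
    fun b c => ?_, hT⟩
  calc ‖tsA.tmul (j b) (j c)‖ ≤ ‖j b‖ * ‖j c‖ := tsA.norm_tmul_le _ _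
    _ ≤ (‖j‖ * ‖b‖) * (‖j‖ * ‖c‖) := by gcongr <;> exact j.le_opNorm _
    _ = ‖j‖ * ‖j‖ * ‖b‖ * ‖c‖ := by ring

variable {tsA tsB} {j : B →L[ℂ] A} (hj : ∀ b c, j (b * c) = j b * j c)
  {T : tsB.X →L[ℂ] tsA.X} (hT : ∀ b c, T (tsB.tmul b c) = tsA.tmul (j b) (j c))
include hj hT

theorem mulMap_comp_of_map_tmul : tsA.mulMap.comp T = j.comp tsB.mulMap :=
  tsB.ext_tmul_s5 fun b c => by
    simp only [ContinuousLinearMap.comp_apply, hT, mulMap_tmul, hj]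

theorem comp_rsmul_of_map_tmul (v : B) : T.comp (tsB.rsmul v) = (tsA.rsmul (j v)).comp T :=
  tsB.ext_tmul_s5 fun b c => by
    simp only [ContinuousLinearMap.comp_apply, rsmul_tmul, hT, hj]

theorem comp_lsmul_of_map_tmul (v : B) : T.comp (tsB.lsmul v) = (tsA.lsmul (j v)).comp T :=
  tsB.ext_tmul_s5 fun b c => by
    simp only [ContinuousLinearMap.comp_apply, lsmul_tmul, hT, hj]

theorem dualSandwich_piStar {θ : (tsB.X →L[ℂ] ℂ) →L[ℂ] B →L[ℂ] ℂ}
    (hθ : ∀ φ, θ (tsB.piStar φ) = φ) (R : A →L[ℂ] B) (φ : A →L[ℂ] ℂ) (a : A) :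
    θ.dualSandwich T R (tsA.piStar φ) a = φ (j (R a)) := by
  have : (tsA.piStar φ).comp T = tsB.piStar (φ.comp j) := by
    rw [piStar, piStar, ContinuousLinearMap.comp_assoc, mulMap_comp_of_map_tmul hj hT,
      ContinuousLinearMap.comp_assoc]
  rw [ContinuousLinearMap.dualSandwich_apply, this, hθ, ContinuousLinearMap.comp_apply]

variable [IsScalarTower ℂ B B] [SMulCommClass ℂ B B] {θ : (tsB.X →L[ℂ] ℂ) →L[ℂ] B →L[ℂ] ℂ}

theorem dualSandwich_rsmul_sub (hθ : tsB.IsBimoduleMorphism θ) (R : A →L[ℂ] B)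
    (ψ : tsA.X →L[ℂ] ℂ) (a x : A) :
    θ.dualSandwich T R (ψ.comp (tsA.rsmul a)) x - θ.dualSandwich T R ψ (x * a) =
      θ ((ψ.comp (tsA.rsmul (a - j (R a)))).comp T) (R x) +
        θ (ψ.comp T) (R x * R a - R (x * a)) := by
  have hsplit : (ψ.comp (tsA.rsmul a)).comp T =
      (ψ.comp (tsA.rsmul (a - j (R a)))).comp T + (ψ.comp T).comp (tsB.rsmul (R a)) := by
    rw [ContinuousLinearMap.comp_assoc ψ T, comp_rsmul_of_map_tmul hj hT,
      ← ContinuousLinearMap.comp_assoc, ← ContinuousLinearMap.add_comp,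
      ← ContinuousLinearMap.comp_add, tsA.rsmul_sub, sub_add_cancel]
  simp only [ContinuousLinearMap.dualSandwich_apply, hsplit, map_add, (hθ _ _).1,
    add_apply, ContinuousLinearMap.comp_apply, rmulOp_apply, map_sub]
  ring

theorem dualSandwich_lsmul_sub (hθ : tsB.IsBimoduleMorphism θ) (R : A →L[ℂ] B)
    (ψ : tsA.X →L[ℂ] ℂ) (a x : A) :
    θ.dualSandwich T R (ψ.comp (tsA.lsmul a)) x - θ.dualSandwich T R ψ (a * x) =
      θ ((ψ.comp (tsA.lsmul (a - j (R a)))).comp T) (R x) +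
        θ (ψ.comp T) (R a * R x - R (a * x)) := by
  have hsplit : (ψ.comp (tsA.lsmul a)).comp T =
      (ψ.comp (tsA.lsmul (a - j (R a)))).comp T + (ψ.comp T).comp (tsB.lsmul (R a)) := by
    rw [ContinuousLinearMap.comp_assoc ψ T, comp_lsmul_of_map_tmul hj hT,
      ← ContinuousLinearMap.comp_assoc, ← ContinuousLinearMap.add_comp,
      ← ContinuousLinearMap.comp_add, tsA.lsmul_sub, sub_add_cancel]
  simp only [ContinuousLinearMap.dualSandwich_apply, hsplit, map_add, (hθ _ _).2,
    add_apply, ContinuousLinearMap.comp_apply, lmulOp_apply, map_sub]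
  ring

theorem norm_dualSandwich_rsmul_sub_le (hθ : tsB.IsBimoduleMorphism θ) (R : A →L[ℂ] B)
    (ψ : tsA.X →L[ℂ] ℂ) (a x : A) :
    ‖θ.dualSandwich T R (ψ.comp (tsA.rsmul a)) x - θ.dualSandwich T R ψ (x * a)‖ ≤
      ‖θ‖ * ‖ψ‖ * ‖T‖ * (‖a - j (R a)‖ * ‖R x‖ + ‖R x * R a - R (x * a)‖) := by
  rw [dualSandwich_rsmul_sub hj hT hθ]
  calc _ ≤ ‖θ‖ * ‖(ψ.comp (tsA.rsmul (a - j (R a)))).comp T‖ * ‖R x‖ +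
        ‖θ‖ * ‖ψ.comp T‖ * ‖R x * R a - R (x * a)‖ :=
        (norm_add_le _ _).trans (add_le_add (θ.le_opNorm₂ _ _) (θ.le_opNorm₂ _ _))
    _ ≤ ‖θ‖ * (‖ψ‖ * ‖a - j (R a)‖ * ‖T‖) * ‖R x‖ +
        ‖θ‖ * (‖ψ‖ * ‖T‖) * ‖R x * R a - R (x * a)‖ := by
      gcongr
      · refine (ψ.comp _).opNorm_comp_le T |>.trans ?_
        gcongr
        exact (ψ.opNorm_comp_le _).trans (by gcongr; exact tsA.norm_rsmul_le _)
      · exact ψ.opNorm_comp_le T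
    _ = _ := by ring

theorem norm_dualSandwich_lsmul_sub_le (hθ : tsB.IsBimoduleMorphism θ) (R : A →L[ℂ] B)
    (ψ : tsA.X →L[ℂ] ℂ) (a x : A) :
    ‖θ.dualSandwich T R (ψ.comp (tsA.lsmul a)) x - θ.dualSandwich T R ψ (a * x)‖ ≤
      ‖θ‖ * ‖ψ‖ * ‖T‖ * (‖a - j (R a)‖ * ‖R x‖ + ‖R a * R x - R (a * x)‖) := by
  rw [dualSandwich_lsmul_sub hj hT hθ]
  calc _ ≤ ‖θ‖ * ‖(ψ.comp (tsA.lsmul (a - j (R a)))).comp T‖ * ‖R x‖ +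
        ‖θ‖ * ‖ψ.comp T‖ * ‖R a * R x - R (a * x)‖ :=
        (norm_add_le _ _).trans (add_le_add (θ.le_opNorm₂ _ _) (θ.le_opNorm₂ _ _))
    _ ≤ ‖θ‖ * (‖ψ‖ * ‖a - j (R a)‖ * ‖T‖) * ‖R x‖ +
        ‖θ‖ * (‖ψ‖ * ‖T‖) * ‖R a * R x - R (a * x)‖ := by
      gcongr
      · refine (ψ.comp _).opNorm_comp_le T |>.trans ?_
        gcongr
        exact (ψ.opNorm_comp_le _).trans (by gcongr; exact tsA.norm_lsmul_le _)
      · exact ψ.opNorm_comp_le T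
    _ = _ := by ring

end

variable {A : Type u} [NonUnitalNormedRing A] [NormedSpace ℂ A] [IsScalarTower ℂ A A]
  [SMulCommClass ℂ A A] (tsA : TensorSquare A)

theorem biflat_of_tendsto {ι : Type*} (F : Filter ι) [F.NeBot]
    (Θ : ι → (tsA.X →L[ℂ] ℂ) →L[ℂ] A →L[ℂ] ℂ) (K : ℝ)
    (hΘ : ∀ i ψ a, ‖Θ i ψ a‖ ≤ K * ‖ψ‖ * ‖a‖)
    (hr : ∀ a ψ x, Tendsto (fun i => Θ i (ψ.comp (tsA.rsmul a)) x - Θ i ψ (x * a)) F (𝓝 0))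
    (hl : ∀ a ψ x, Tendsto (fun i => Θ i (ψ.comp (tsA.lsmul a)) x - Θ i ψ (a * x)) F (𝓝 0))
    (hid : ∀ φ a, Tendsto (fun i => Θ i (tsA.piStar φ) a) F (𝓝 (φ a))) :
    tsA.Biflat := by
  obtain ⟨θ, hθ⟩ :=
    ContinuousLinearMap.exists_tendsto_apply_apply_of_norm_le_s5 (Ultrafilter.of F) Θ K hΘ
  have hU : ↑(Ultrafilter.of F) ≤ F := Ultrafilter.of_le F
  refine ⟨θ, fun a ψ => ⟨?_, ?_⟩, fun φ => ?_⟩ <;> ext x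
  · exact sub_eq_zero.1 <|
      tendsto_nhds_unique ((hθ _ x).sub (hθ ψ (x * a))) ((hr a ψ x).mono_left hU)
  · exact sub_eq_zero.1 <|
      tendsto_nhds_unique ((hθ _ x).sub (hθ ψ (a * x))) ((hl a ψ x).mono_left hU)
  · exact tendsto_nhds_unique (hθ _ x) ((hid φ x).mono_left hU)

theorem biflat_of_approxRetract {ι : Type*} (F : Filter ι) [F.NeBot] {B : ι → Type u}
    [∀ i, NonUnitalNormedRing (B i)] [∀ i, NormedSpace ℂ (B i)]
    [∀ i, IsScalarTower ℂ (B i) (B i)] [∀ i, SMulCommClass ℂ (B i) (B i)]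
    [∀ i, CompleteSpace (B i)] (tsB : ∀ i, TensorSquare (B i)) (C : ℝ)
    (hB : ∀ i, (tsB i).BiflatWithBound C) (j : ∀ i, B i →L[ℂ] A) (hj_norm : ∀ i, ‖j i‖ ≤ 1)
    (hj_mul : ∀ i b c, j i (b * c) = j i b * j i c) (R : ∀ i, A →L[ℂ] B i) (M : ℝ)
    (hR : ∀ i a, ‖R i a‖ ≤ M * ‖a‖) (hjR : ∀ a, Tendsto (fun i => j i (R i a)) F (𝓝 a))
    (hR_mul : ∀ a b, Tendsto (fun i => ‖R i a * R i b - R i (a * b)‖) F (𝓝 0)) :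
    tsA.Biflat := by
  choose θ hθ_norm hθ_bimod hθ_id using hB
  choose T hT_norm hT using fun i => exists_map_tmul tsA (tsB i) (j i)
  have hT_le : ∀ i, ‖T i‖ ≤ 1 := fun i =>
    (hT_norm i).trans (mul_le_one₀ (hj_norm i) (norm_nonneg _) (hj_norm i))
  obtain ⟨i₀⟩ := F.nonempty_of_neBot
  have hC : 0 ≤ C := (norm_nonneg (θ i₀)).trans (hθ_norm i₀)
  have hdefect : ∀ (ψ : tsA.X →L[ℂ] ℂ) (a x y z : A), Tendsto (fun i => C * ‖ψ‖ *
      (‖a - j i (R i a)‖ * (M * ‖x‖) + ‖R i y * R i z - R i (y * z)‖)) F (𝓝 0) := by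
    intro ψ a x y z
    have ha : Tendsto (fun i => ‖a - j i (R i a)‖) F (𝓝 0) := by
      simpa using ((hjR a).const_sub a).norm
    simpa using ((ha.mul_const (M * ‖x‖)).add (hR_mul y z)).const_mul (C * ‖ψ‖)
  have hbound : ∀ i (ψ : tsA.X →L[ℂ] ℂ) s t, 0 ≤ s → s ≤ t →
      ‖θ i‖ * ‖ψ‖ * ‖T i‖ * s ≤ C * ‖ψ‖ * t := fun i ψ s t hs hst =>
    calc ‖θ i‖ * ‖ψ‖ * ‖T i‖ * s ≤ C * ‖ψ‖ * 1 * t := by gcongr <;> simp_all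
      _ = C * ‖ψ‖ * t := by ring
  refine biflat_of_tendsto tsA F (fun i => (θ i).dualSandwich (T i) (R i)) (C * M)
    (fun i ψ a => ?_) (fun a ψ x => ?_) (fun a ψ x => ?_) (fun φ a => ?_)
  · exact ((θ i).norm_dualSandwich_apply_le (T i) (R i) ψ a).trans
      (hbound i ψ _ _ (norm_nonneg _) (hR i a)) |>.trans_eq (by ring)
  · refine squeeze_zero_norm (fun i => (norm_dualSandwich_rsmul_sub_le (hj_mul i) (hT i)
      (hθ_bimod i) (R i) ψ a x).trans (hbound i ψ _ _ (by positivity) ?_)) (hdefect ψ a x x a)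
    gcongr
    exact hR i x
  · refine squeeze_zero_norm (fun i => (norm_dualSandwich_lsmul_sub_le (hj_mul i) (hT i)
      (hθ_bimod i) (R i) ψ a x).trans (hbound i ψ _ _ (by positivity) ?_)) (hdefect ψ a x a x)
    gcongr
    exact hR i x
  · exact ((φ.continuous.tendsto a).comp (hjR a)).congr fun i =>
      (dualSandwich_piStar (hj_mul i) (hT i) (hθ_id i) (R i) φ a).symm

end TensorSquare

theorem Filter.iInf_principal_setOf_subset_neBot {α Γ : Type*} [Nonempty Γ] (S : Γ → Set α)
    (hS : ∀ γ₁ γ₂, ∃ γ₃, S γ₁ ∪ S γ₂ ⊆ S γ₃) : (⨅ γ₀, 𝓟 {γ | S γ₀ ⊆ S γ}).NeBot := by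
  refine iInf_neBot_of_directed' (fun γ₁ γ₂ => ?_) fun γ =>
    principal_neBot_iff.2 ⟨γ, Set.Subset.rfl⟩
  obtain ⟨γ₃, h⟩ := hS γ₁ γ₂
  exact ⟨γ₃, principal_mono.2 fun γ hγ => (Set.subset_union_left.trans h).trans hγ,
    principal_mono.2 fun γ hγ => (Set.subset_union_right.trans h).trans hγ⟩

namespace TensorSquare

variable {A : Type u} [NonUnitalNormedRing A] [NormedSpace ℂ A] [IsScalarTower ℂ A A]
  [SMulCommClass ℂ A A] (tsA : TensorSquare A) {Γ : Type u} {B : Γ → Type u}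
  [∀ γ, NonUnitalNormedRing (B γ)] [∀ γ, NormedSpace ℂ (B γ)]
  [∀ γ, IsScalarTower ℂ (B γ) (B γ)] [∀ γ, SMulCommClass ℂ (B γ) (B γ)]
  [∀ γ, CompleteSpace (B γ)] {tsB : ∀ γ, TensorSquare (B γ)} {C : ℝ}
  (hB : ∀ γ, (tsB γ).BiflatWithBound C) {j : ∀ γ, B γ →L[ℂ] A}
  (hj_isometry : ∀ γ b, ‖j γ b‖ = ‖b‖) (hj_mul : ∀ γ b c, j γ (b * c) = j γ b * j γ c)
include hB hj_isometry hj_mul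

theorem biflat_of_centralApproxIdentity {ι : Type*} (F : Filter ι) [F.NeBot]
    (hj_ideal : ∀ γ a (b : B γ), j γ b * a ∈ Set.range (j γ)) (e : ι → A) (M : ℝ)
    (he_mem : ∀ i, e i ∈ ⋃ γ, Set.range (j γ)) (he_central : ∀ i a, e i * a = a * e i)
    (he_bound : ∀ i a, ‖e i * a‖ ≤ M * ‖a‖) (he : ∀ a, Tendsto (fun i => e i * a) F (𝓝 a)) :
    tsA.Biflat := by
  choose g b hb using fun i => Set.mem_iUnion.1 (he_mem i)
  choose R hR using fun i => (j (g i)).exists_lift_of_isometry (hj_isometry _)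
    (lmulOp A (e i)) fun a => hb i ▸ hj_ideal (g i) a (b i)
  simp only [lmulOp_apply] at hR
  -- centrality turns `(e a) (e b) - e (a b)` into `e (e (a b) - a b)`
  have hR_mul : ∀ i x y, ‖R i x * R i y - R i (x * y)‖ ≤ M * ‖e i * (x * y) - x * y‖ :=
    fun i x y => by
      rw [← hj_isometry, map_sub, hj_mul, hR, hR, hR, mul_assoc, ← mul_assoc x, ← he_central,
        mul_assoc, ← mul_sub]
      exact he_bound i _
  refine tsA.biflat_of_approxRetract F (fun i => tsB (g i)) C (fun i => hB _) (fun i => j (g i))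
    (fun i => (j (g i)).opNorm_le_one_of_isometry (hj_isometry _)) (fun i => hj_mul _) R M
    (fun i a => hj_isometry (g i) (R i a) ▸ hR i a ▸ he_bound i a)
    (fun a => by simpa only [hR] using he a) fun x y => ?_
  refine squeeze_zero (fun _ => norm_nonneg _) (hR_mul · x y) ?_
  simpa using ((he (x * y)).sub_const (x * y)).norm.const_mul M

theorem biflat_of_tendsto_projections (F : Filter Γ) [F.NeBot] (P : Γ → A →L[ℂ] A)
    (hP_mul : ∀ γ a b, P γ (a * b) = P γ a * P γ b)
    (hP_range : ∀ γ a, P γ a ∈ Set.range (j γ)) (M : ℝ) (hP_bound : ∀ γ, ‖P γ‖ ≤ M)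
    (hP : ∀ a, Tendsto (fun γ => P γ a) F (𝓝 a)) : tsA.Biflat := by
  choose R hR using fun γ => (j γ).exists_lift_of_isometry (hj_isometry γ) (P γ) (hP_range γ)
  have hR_mul : ∀ γ x y, R γ x * R γ y = R γ (x * y) := fun γ x y =>
    (AddMonoidHomClass.isometry_of_norm _ (hj_isometry γ)).injective <| by
      rw [hj_mul, hR, hR, hR, hP_mul]
  refine tsA.biflat_of_approxRetract F tsB C hB j
    (fun γ => (j γ).opNorm_le_one_of_isometry (hj_isometry γ)) hj_mul R M
    (fun γ a => ?_) (fun a => by simpa only [hR] using hP a)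
    fun x y => by simpa only [hR_mul, sub_self, norm_zero] using tendsto_const_nhds
  rw [← hj_isometry, hR]
  exact (P γ).le_opNorm a |>.trans (by gcongr; exact hP_bound γ)

end TensorSquare

theorem directedUnion_biflat_general
    (A : Type u) [NonUnitalNormedRing A] [NormedSpace ℂ A] [IsScalarTower ℂ A A]
    [SMulCommClass ℂ A A] (tsA : TensorSquare A)
    (Γ : Type u) (B : Γ → Type u) [∀ γ, NonUnitalNormedRing (B γ)]
    [∀ γ, NormedSpace ℂ (B γ)] [∀ γ, IsScalarTower ℂ (B γ) (B γ)]
    [∀ γ, SMulCommClass ℂ (B γ) (B γ)] [∀ γ, CompleteSpace (B γ)]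
    (j : ∀ γ, B γ →L[ℂ] A)
    (hj_isometry : ∀ (γ) (b : B γ), ‖j γ b‖ = ‖b‖)
    (hj_mul : ∀ (γ) (b c : B γ), j γ (b * c) = j γ b * j γ c)
    (hj_ideal : ∀ (γ) (a : A) (b : B γ),
      a * j γ b ∈ Set.range (j γ) ∧ j γ b * a ∈ Set.range (j γ))
    (hdirected : ∀ γ₁ γ₂ : Γ, ∃ γ₃, Set.range (j γ₁) ∪ Set.range (j γ₂) ⊆ Set.range (j γ₃))
    (P : Γ → (A →L[ℂ] A))
    (hP_mul : ∀ (γ) (a b : A), P γ (a * b) = P γ a * P γ b)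
    (hP_range : ∀ γ, Set.range (P γ) = Set.range (j γ))
    (tsB : ∀ γ, TensorSquare (B γ))
    (hbiflat : ∃ C : ℝ, ∀ γ, (tsB γ).BiflatWithBound C)
    (hcase :
      (∃ (ι : Type u) (ne : Nonempty ι) (sl : SemilatticeSup ι) (e : ι → A) (M : ℝ),
        letI := ne
        letI := sl
        (∀ i, e i ∈ ⋃ γ, Set.range (j γ)) ∧ (∀ (i) (a : A), e i * a = a * e i) ∧
          (∀ (i) (a : A), ‖e i * a‖ ≤ M * ‖a‖) ∧
          ∀ a : A, Tendsto (fun i => e i * a) atTop (𝓝 a) ∧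
            Tendsto (fun i => a * e i) atTop (𝓝 a)) ∨
      ((∀ a : A, ∀ ε > (0 : ℝ), ∃ γ, ∀ γ',
        Set.range (j γ) ⊆ Set.range (j γ') → ‖P γ' a - a‖ < ε) ∧
        ∃ M : ℝ, ∀ γ, ‖P γ‖ ≤ M)) :
    tsA.Biflat := by
  obtain ⟨C, hC⟩ := hbiflat
  rcases hcase with ⟨ι, _, _, e, M, he_mem, he_central, he_bound, he⟩ | ⟨hP, M, hP_bound⟩
  · exact tsA.biflat_of_centralApproxIdentity hC hj_isometry hj_mul atTop
      (fun γ a b => (hj_ideal γ a b).2) e M he_mem he_central he_bound fun a => (he a).1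
  · have : Nonempty Γ := (hP 0 1 one_pos).nonempty
    have := iInf_principal_setOf_subset_neBot (fun γ => Set.range (j γ)) hdirected
    refine tsA.biflat_of_tendsto_projections hC hj_isometry hj_mul
      (⨅ γ₀, 𝓟 {γ | Set.range (j γ₀) ⊆ Set.range (j γ)}) P hP_mul
      (fun γ a => hP_range γ ▸ Set.mem_range_self a) M hP_bound fun a => ?_
    refine Metric.tendsto_nhds.2 fun ε hε => ?_
    obtain ⟨γ, hγ⟩ := hP a ε hε
    exact mem_iInf_of_mem γ fun γ' h => by simpa [dist_eq_norm] using hγ γ' h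

/-- Proposition 2.7(b): let `A` be a Banach algebra containing a directed
family of closed ideals `{A_γ}` (realized as isometrically embedded Banach algebras `B γ`)
with bounded homomorphic projections `P γ : A → A_γ`.  Suppose each `A_γ` is biflat with
`sup_γ BF_{A_γ} < ∞`, and either `A` has a central approximate identity contained in
`⋃ γ, A_γ` bounded in the multiplier norm of `A`, or `‖P γ a - a‖ → 0` for each `a ∈ A` with
`sup_γ ‖P γ‖ < ∞`.  Then `A` is biflat. -/
theorem directedUnion_biflat
    (A : Type u) [NonUnitalNormedRing A] [NormedSpace ℂ A] [IsScalarTower ℂ A A]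
    [SMulCommClass ℂ A A] [CompleteSpace A] (tsA : TensorSquare A)
    (Γ : Type u) (B : Γ → Type u) [∀ γ, NonUnitalNormedRing (B γ)]
    [∀ γ, NormedSpace ℂ (B γ)] [∀ γ, IsScalarTower ℂ (B γ) (B γ)]
    [∀ γ, SMulCommClass ℂ (B γ) (B γ)] [∀ γ, CompleteSpace (B γ)]
    (j : ∀ γ, B γ →L[ℂ] A)
    (hj_isometry : ∀ (γ) (b : B γ), ‖j γ b‖ = ‖b‖)
    (hj_mul : ∀ (γ) (b c : B γ), j γ (b * c) = j γ b * j γ c)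
    (hj_ideal : ∀ (γ) (a : A) (b : B γ),
      a * j γ b ∈ Set.range (j γ) ∧ j γ b * a ∈ Set.range (j γ))
    (hdirected : ∀ γ₁ γ₂ : Γ, ∃ γ₃, Set.range (j γ₁) ∪ Set.range (j γ₂) ⊆ Set.range (j γ₃))
    (P : Γ → (A →L[ℂ] A))
    (hP_mul : ∀ (γ) (a b : A), P γ (a * b) = P γ a * P γ b)
    (hP_range : ∀ γ, Set.range (P γ) = Set.range (j γ))
    (hP_proj : ∀ (γ) (b : B γ), P γ (j γ b) = j γ b)
    (tsB : ∀ γ, TensorSquare (B γ))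
    (hbiflat : ∃ C : ℝ, ∀ γ, (tsB γ).BiflatWithBound C)
    (hcase :
      (∃ (ι : Type u) (ne : Nonempty ι) (sl : SemilatticeSup ι) (e : ι → A) (M : ℝ),
        letI := ne
        letI := sl
        (∀ i, e i ∈ ⋃ γ, Set.range (j γ)) ∧ (∀ (i) (a : A), e i * a = a * e i) ∧
          (∀ (i) (a : A), ‖e i * a‖ ≤ M * ‖a‖) ∧
          ∀ a : A, Tendsto (fun i => e i * a) atTop (𝓝 a) ∧
            Tendsto (fun i => a * e i) atTop (𝓝 a)) ∨
      ((∀ a : A, ∀ ε > (0 : ℝ), ∃ γ, ∀ γ',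
        Set.range (j γ) ⊆ Set.range (j γ') → ‖P γ' a - a‖ < ε) ∧
        ∃ M : ℝ, ∀ γ, ‖P γ‖ ≤ M)) :
    tsA.Biflat :=
  directedUnion_biflat_general A tsA Γ B j hj_isometry hj_mul hj_ideal hdirected P hP_mul hP_range
    tsB hbiflat hcase
end
end
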